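/- arXiv:1509.02682 — 10 statements merged into one kernel-verified Lean document; each statement's English description precedes it below -/
import Mathlib

section
/- In H(f), for every g ∈ ℂ[h] and k ≥ 1, one has (x^k g(h) y^k) x = x (x^k σ(g)(h) y^k + x^{k-1} (σ^k(h) − h) g(h) y^{k-1}). -/
open Polynomial MulOpposite

noncomputable section

/-- Defining relations of the generalized Heisenberg algebra H(f):
generators x (index 0), y (index 1), h (index 2) with
h*x = x*f(h), y*h = f(h)*y, y*x = x*y + (f(h) - h). -/
inductive HeisRel (f : ℂ[X]) : FreeAlgebra ℂ (Fin 3) → FreeAlgebra ℂ (Fin 3) → Prop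
  | hx : HeisRel f (FreeAlgebra.ι ℂ 2 * FreeAlgebra.ι ℂ 0)
      (FreeAlgebra.ι ℂ 0 * aeval (FreeAlgebra.ι ℂ 2) f)
  | yh : HeisRel f (FreeAlgebra.ι ℂ 1 * FreeAlgebra.ι ℂ 2)
      (aeval (FreeAlgebra.ι ℂ 2) f * FreeAlgebra.ι ℂ 1)
  | yx : HeisRel f (FreeAlgebra.ι ℂ 1 * FreeAlgebra.ι ℂ 0)
      (FreeAlgebra.ι ℂ 0 * FreeAlgebra.ι ℂ 1 + (aeval (FreeAlgebra.ι ℂ 2) f - FreeAlgebra.ι ℂ 2))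

/-- The generalized Heisenberg algebra H(f). -/
abbrev GHA (f : ℂ[X]) := RingQuot (HeisRel f)

def ghaX (f : ℂ[X]) : GHA f := RingQuot.mkAlgHom ℂ (HeisRel f) (FreeAlgebra.ι ℂ 0)
def ghaY (f : ℂ[X]) : GHA f := RingQuot.mkAlgHom ℂ (HeisRel f) (FreeAlgebra.ι ℂ 1)
def ghaH (f : ℂ[X]) : GHA f := RingQuot.mkAlgHom ℂ (HeisRel f) (FreeAlgebra.ι ℂ 2)

/-- k-th compositional power of σ applied to h, as a polynomial: σ^k(h). -/
def sigmaIter (f : ℂ[X]) : ℕ → ℂ[X]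
  | 0 => X
  | k + 1 => (sigmaIter f k).comp f


lemma gha_aevalH (f p : ℂ[X]) :
    aeval (ghaH f) p = RingQuot.mkAlgHom ℂ (HeisRel f) (aeval (FreeAlgebra.ι ℂ 2) p) :=
  Polynomial.aeval_algHom_apply _ _ _

lemma gha_rel_hx (f : ℂ[X]) : ghaH f * ghaX f = ghaX f * aeval (ghaH f) f := by
  rw [gha_aevalH, ghaH, ghaX, ← map_mul, ← map_mul]
  exact RingQuot.mkAlgHom_rel ℂ HeisRel.hx

lemma gha_rel_yh (f : ℂ[X]) : ghaY f * ghaH f = aeval (ghaH f) f * ghaY f := by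
  rw [gha_aevalH, ghaY, ghaH, ← map_mul, ← map_mul]
  exact RingQuot.mkAlgHom_rel ℂ HeisRel.yh

lemma gha_rel_yx (f : ℂ[X]) : ghaY f * ghaX f
    = ghaX f * ghaY f + (aeval (ghaH f) f - ghaH f) := by
  rw [gha_aevalH, ghaY, ghaX, ghaH, ← map_mul, ← map_mul, ← map_sub, ← map_add]
  exact RingQuot.mkAlgHom_rel ℂ HeisRel.yx


lemma gha_hpow_x (f : ℂ[X]) (n : ℕ) :
    ghaH f ^ n * ghaX f = ghaX f * (aeval (ghaH f) f) ^ n := by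
  induction n with
  | zero => simp
  | succ n ih =>
    rw [pow_succ, mul_assoc, gha_rel_hx, ← mul_assoc, ih, mul_assoc, ← pow_succ]

lemma gha_aeval_x (f p : ℂ[X]) :
    aeval (ghaH f) p * ghaX f = ghaX f * aeval (ghaH f) (p.comp f) := by
  induction p using Polynomial.induction_on' with
  | add p q hp hq => rw [map_add, add_mul, hp, hq, add_comp, map_add, mul_add]
  | monomial n a =>
    rw [aeval_monomial, monomial_comp, map_mul, aeval_C, map_pow,
      mul_assoc, gha_hpow_x, ← mul_assoc, Algebra.commutes, mul_assoc]

lemma gha_y_hpow (f : ℂ[X]) (n : ℕ) :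
    ghaY f * ghaH f ^ n = (aeval (ghaH f) f) ^ n * ghaY f := by
  induction n with
  | zero => simp
  | succ n ih =>
    rw [pow_succ, ← mul_assoc, ih, mul_assoc, gha_rel_yh, ← mul_assoc, ← pow_succ]

lemma gha_y_aeval (f p : ℂ[X]) :
    ghaY f * aeval (ghaH f) p = aeval (ghaH f) (p.comp f) * ghaY f := by
  induction p using Polynomial.induction_on' with
  | add p q hp hq => rw [map_add, mul_add, hp, hq, add_comp, map_add, add_mul]
  | monomial n a =>
    rw [aeval_monomial, monomial_comp, map_mul, aeval_C, map_pow,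
      Algebra.commutes a (ghaH f ^ n), ← mul_assoc, gha_y_hpow, mul_assoc,
      ← Algebra.commutes, ← mul_assoc, Algebra.commutes a ((aeval (ghaH f) f) ^ n)]

lemma gha_aeval_comm (f p q : ℂ[X]) :
    aeval (ghaH f) p * aeval (ghaH f) q = aeval (ghaH f) q * aeval (ghaH f) p := by
  rw [← map_mul, mul_comm, map_mul]

lemma gha_ypow_x (f : ℂ[X]) (m : ℕ) :
    ghaY f ^ (m + 1) * ghaX f = ghaX f * ghaY f ^ (m + 1)
      + (aeval (ghaH f) (sigmaIter f (m + 1)) - ghaH f) * ghaY f ^ m := by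
  induction m with
  | zero => simpa [sigmaIter] using gha_rel_yx f
  | succ m ih =>
    have hy : ghaY f * (aeval (ghaH f) (sigmaIter f (m + 1)) - ghaH f)
        = (aeval (ghaH f) (sigmaIter f (m + 2)) - aeval (ghaH f) f) * ghaY f := by
      have h1 : ghaY f * aeval (ghaH f) (sigmaIter f (m + 1) - X)
          = aeval (ghaH f) ((sigmaIter f (m + 1) - X).comp f) * ghaY f :=
        gha_y_aeval f _
      rw [map_sub, aeval_X] at h1
      rw [h1, sub_comp, X_comp, map_sub,
        show sigmaIter f (m + 2) = (sigmaIter f (m + 1)).comp f from rfl]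
    calc ghaY f ^ (m + 2) * ghaX f
        = ghaY f * (ghaY f ^ (m + 1) * ghaX f) := by
          rw [← mul_assoc, ← pow_succ']
      _ = ghaY f * ghaX f * ghaY f ^ (m + 1)
          + ghaY f * (aeval (ghaH f) (sigmaIter f (m + 1)) - ghaH f) * ghaY f ^ m := by
          rw [ih, mul_add, ← mul_assoc, ← mul_assoc]
      _ = (ghaX f * ghaY f + (aeval (ghaH f) f - ghaH f)) * ghaY f ^ (m + 1)
          + (aeval (ghaH f) (sigmaIter f (m + 2)) - aeval (ghaH f) f) * ghaY f * ghaY f ^ m := by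
          rw [gha_rel_yx, hy]
      _ = ghaX f * ghaY f ^ (m + 2)
          + (aeval (ghaH f) (sigmaIter f (m + 2)) - ghaH f) * ghaY f ^ (m + 1) := by
          rw [add_mul, mul_assoc, ← pow_succ', mul_assoc, ← pow_succ', add_assoc,
            ← add_mul, add_comm (aeval (ghaH f) f - ghaH f), sub_add_sub_cancel]


/-- (x^k g(h) y^k) x = x (x^k σ(g)(h) y^k + x^(k-1)(σ^k(h) - h) g(h) y^(k-1)). -/
theorem gha_right_mult_x (f : ℂ[X]) (g : ℂ[X]) (k : ℕ) (hk : 1 ≤ k) :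
    ((ghaX f) ^ k * aeval (ghaH f) g * (ghaY f) ^ k) * ghaX f
      = ghaX f * ((ghaX f) ^ k * aeval (ghaH f) (g.comp f) * (ghaY f) ^ k
          + (ghaX f) ^ (k - 1) * (aeval (ghaH f) (sigmaIter f k) - ghaH f)
              * aeval (ghaH f) g * (ghaY f) ^ (k - 1)) := by
  obtain ⟨m, rfl⟩ : ∃ m, k = m + 1 := ⟨k - 1, (Nat.succ_pred_eq_of_pos hk).symm⟩
  simp only [Nat.add_sub_cancel]
  have hcomm : (aeval (ghaH f) (sigmaIter f (m + 1)) - ghaH f) * aeval (ghaH f) g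
      = aeval (ghaH f) g * (aeval (ghaH f) (sigmaIter f (m + 1)) - ghaH f) := by
    have := gha_aeval_comm f (sigmaIter f (m + 1) - X) g
    simpa [map_sub] using this
  calc (ghaX f) ^ (m+1) * aeval (ghaH f) g * (ghaY f) ^ (m+1) * ghaX f
      = (ghaX f) ^ (m+1) * aeval (ghaH f) g * ((ghaY f) ^ (m+1) * ghaX f) := by
        rw [mul_assoc]
    _ = (ghaX f) ^ (m+1) * (aeval (ghaH f) g * ghaX f) * (ghaY f) ^ (m+1)
        + (ghaX f) ^ (m+1) * (aeval (ghaH f) g * (aeval (ghaH f) (sigmaIter f (m+1)) - ghaH f)) * (ghaY f) ^ m := by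
        rw [gha_ypow_x, mul_add]
        simp only [mul_assoc]
    _ = ghaX f * ((ghaX f) ^ (m+1) * aeval (ghaH f) (g.comp f) * (ghaY f) ^ (m+1)
          + (ghaX f) ^ m * (aeval (ghaH f) (sigmaIter f (m+1)) - ghaH f)
              * aeval (ghaH f) g * (ghaY f) ^ m) := by
        rw [gha_aeval_x, ← hcomm, mul_add]
        simp only [← mul_assoc]
        rw [← pow_succ]
        simp only [← pow_succ']
end
end

section
/- In H(f), any two elements of the form x^k g(h) y^k and x^j g̃(h) y^j (with g, g̃ ∈ ℂ[h] and j, k ≥ 0) commute; consequently the span H(f)_0 of all monomials x^k h^m y^k is a commutative subalgebra of H(f). -/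
open Polynomial MulOpposite

noncomputable section

section Aux

variable (f : ℂ[X])

lemma rel_hx : ghaH f * ghaX f = ghaX f * aeval (ghaH f) f := by
  have h := RingQuot.mkAlgHom_rel ℂ (HeisRel.hx (f := f))
  simpa [ghaH, ghaX, map_mul, ← Polynomial.aeval_algHom_apply] using h

lemma rel_yh : ghaY f * ghaH f = aeval (ghaH f) f * ghaY f := by
  have h := RingQuot.mkAlgHom_rel ℂ (HeisRel.yh (f := f))
  simpa [ghaH, ghaY, map_mul, ← Polynomial.aeval_algHom_apply] using h

lemma rel_yx : ghaY f * ghaX f = ghaX f * ghaY f + (aeval (ghaH f) f - ghaH f) := by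
  have h := RingQuot.mkAlgHom_rel ℂ (HeisRel.yx (f := f))
  simpa [ghaH, ghaX, ghaY, map_mul, map_add, map_sub, ← Polynomial.aeval_algHom_apply] using h

lemma sigma_comp_comm : ∀ m, f.comp (sigmaIter f m) = sigmaIter f (m + 1)
  | 0 => by simp [sigmaIter]
  | m + 1 => by
    show f.comp ((sigmaIter f m).comp f) = (sigmaIter f (m+1)).comp f
    rw [← Polynomial.comp_assoc, sigma_comp_comm m]

lemma aeval_mul_x (g : ℂ[X]) :
    aeval (ghaH f) g * ghaX f = ghaX f * aeval (ghaH f) (g.comp f) := by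
  induction g using Polynomial.induction_on' with
  | add p q hp hq => rw [map_add, add_mul, hp, hq, add_comp, map_add, mul_add]
  | monomial n a =>
    rw [aeval_monomial, monomial_comp, map_mul, aeval_C, map_pow]
    have hpow : ∀ n : ℕ, (ghaH f) ^ n * ghaX f = ghaX f * (aeval (ghaH f) f) ^ n := by
      intro n
      induction n with
      | zero => simp
      | succ n ih =>
        rw [pow_succ, mul_assoc, rel_hx, ← mul_assoc, ih, mul_assoc, ← pow_succ]
    rw [mul_assoc, hpow, ← mul_assoc, Algebra.commutes, mul_assoc]

lemma y_mul_aeval (g : ℂ[X]) :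
    ghaY f * aeval (ghaH f) g = aeval (ghaH f) (g.comp f) * ghaY f := by
  induction g using Polynomial.induction_on' with
  | add p q hp hq => rw [map_add, mul_add, hp, hq, add_comp, map_add, add_mul]
  | monomial n a =>
    rw [aeval_monomial, monomial_comp, map_mul, aeval_C, map_pow]
    have hpow : ∀ n : ℕ, ghaY f * (ghaH f) ^ n = (aeval (ghaH f) f) ^ n * ghaY f := by
      intro n
      induction n with
      | zero => simp
      | succ n ih =>
        rw [pow_succ, ← mul_assoc, ih, mul_assoc, rel_yh, ← mul_assoc, ← pow_succ]
    rw [← mul_assoc, ← Algebra.commutes, mul_assoc, hpow, ← mul_assoc, Algebra.commutes]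

lemma aeval_mul_xpow (m : ℕ) (g : ℂ[X]) :
    aeval (ghaH f) g * (ghaX f) ^ m = (ghaX f) ^ m * aeval (ghaH f) (g.comp (sigmaIter f m)) := by
  induction m generalizing g with
  | zero => simp [sigmaIter]
  | succ m ih =>
    rw [pow_succ, ← mul_assoc, ih, mul_assoc, aeval_mul_x, ← mul_assoc, ← pow_succ,
      Polynomial.comp_assoc]
    rfl

lemma ypow_mul_aeval (m : ℕ) (g : ℂ[X]) :
    (ghaY f) ^ m * aeval (ghaH f) g = aeval (ghaH f) (g.comp (sigmaIter f m)) * (ghaY f) ^ m := by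
  induction m generalizing g with
  | zero => simp [sigmaIter]
  | succ m ih =>
    rw [pow_succ', mul_assoc, ih, ← mul_assoc, y_mul_aeval, Polynomial.comp_assoc,
      mul_assoc, ← pow_succ']
    rfl

lemma sigmaIter_one : sigmaIter f 1 = f := by simp [sigmaIter]

lemma y_mul_xpow (m : ℕ) :
    ghaY f * (ghaX f) ^ (m + 1) = (ghaX f) ^ (m + 1) * ghaY f
      + (ghaX f) ^ m * aeval (ghaH f) (sigmaIter f (m + 1) - X) := by
  induction m with
  | zero =>
    simpa [sigmaIter, map_sub] using rel_yx f
  | succ m ih =>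
    rw [pow_succ, ← mul_assoc, ih, add_mul, mul_assoc, rel_yx, mul_assoc,
      aeval_mul_x, map_sub]
    rw [sub_comp, X_comp]
    have hs : (sigmaIter f (m+1)).comp f = sigmaIter f (m+2) := rfl
    rw [hs, mul_add, ← mul_assoc, ← pow_succ, ← mul_assoc, ← pow_succ, map_sub]
    rw [aeval_X, add_assoc, ← mul_add]
    congr 2
    abel

/-- y * x^m = x^m y + x^(m-1) (σ^m(h) - h), valid for all m with ℕ-subtraction. -/
lemma y_mul_xpow' (m : ℕ) :
    ghaY f * (ghaX f) ^ m = (ghaX f) ^ m * ghaY f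
      + (ghaX f) ^ (m - 1) * aeval (ghaH f) (sigmaIter f m - X) := by
  cases m with
  | zero => simp [sigmaIter]
  | succ m => simpa using y_mul_xpow f m

/-- coefficient polynomials in the expansion of y^k x^j -/
def heisC (f : ℂ[X]) : ℕ → ℕ → ℕ → ℂ[X]
  | 0, _, 0 => 1
  | 0, _, _ + 1 => 0
  | k + 1, j, 0 => (heisC f k j 0).comp f
  | k + 1, j, i + 1 =>
      (heisC f k j (i + 1)).comp f + (sigmaIter f (j - i) - X) * heisC f k j i

lemma heisC_zero (k j : ℕ) : heisC f k j 0 = 1 := by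
  induction k with
  | zero => rfl
  | succ k ih => show (heisC f k j 0).comp f = 1; rw [ih, one_comp]

lemma heisC_vanish1 : ∀ k j i, k < i → heisC f k j i = 0
  | 0, j, i + 1, _ => rfl
  | k + 1, j, i + 1, h => by
    show (heisC f k j (i + 1)).comp f + (sigmaIter f (j - i) - X) * heisC f k j i = 0
    rw [heisC_vanish1 k j (i+1) (by omega), heisC_vanish1 k j i (by omega), zero_comp,
      mul_zero, add_zero]

lemma heisC_vanish2 : ∀ k j i, j < i → heisC f k j i = 0
  | 0, j, i + 1, _ => rfl
  | k + 1, j, i + 1, h => by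
    show (heisC f k j (i + 1)).comp f + (sigmaIter f (j - i) - X) * heisC f k j i = 0
    have hji : j - i = 0 := by omega
    rw [heisC_vanish2 k j (i+1) h, zero_comp, hji]
    show (0:ℂ[X]) + (X - X) * heisC f k j i = 0
    rw [sub_self, zero_mul, add_zero]

lemma heisC_jrec : ∀ k j i, heisC f k (j + 1) (i + 1) =
    (heisC f k j (i + 1)).comp f + (sigmaIter f (k - i) - X) * heisC f k j i
  | 0, j, i => by
    show (0:ℂ[X]) = (0:ℂ[X]).comp f + (sigmaIter f (0 - i) - X) * heisC f 0 j i
    simp [sigmaIter, Nat.zero_sub]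
  | k + 1, j, 0 => by
    have IH := heisC_jrec k j 0
    have e1 : heisC f (k+1) (j+1) (0+1) =
        (heisC f k (j+1) 1).comp f + (sigmaIter f ((j+1) - 0) - X) * heisC f k (j+1) 0 := rfl
    have e2 : heisC f (k+1) j (0+1) =
        (heisC f k j 1).comp f + (sigmaIter f (j - 0) - X) * heisC f k j 0 := rfl
    have e3 : heisC f (k+1) j 0 = (heisC f k j 0).comp f := rfl
    rw [e1, e2, e3, IH, heisC_zero, heisC_zero]
    have hsk : (sigmaIter f k).comp f = sigmaIter f (k + 1) := rfl
    have hsj : (sigmaIter f j).comp f = sigmaIter f (j + 1) := rfl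
    simp only [Nat.sub_zero, Nat.add_sub_cancel, Nat.zero_add, mul_one, one_comp, add_comp,
      sub_comp, X_comp, hsk, hsj]
    abel
  | k + 1, j, i + 1 => by
    have IH1 := heisC_jrec k j (i + 1)
    have IH2 := heisC_jrec k j i
    have e1 : heisC f (k+1) (j+1) (i+1+1) =
        (heisC f k (j+1) (i+1+1)).comp f
          + (sigmaIter f ((j+1) - (i+1)) - X) * heisC f k (j+1) (i+1) := rfl
    have e2 : heisC f (k+1) j (i+1+1) =
        (heisC f k j (i+1+1)).comp f + (sigmaIter f (j - (i+1)) - X) * heisC f k j (i+1) := rfl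
    have e3 : heisC f (k+1) j (i+1) =
        (heisC f k j (i+1)).comp f + (sigmaIter f (j - i) - X) * heisC f k j i := rfl
    have hss : (j + 1) - (i + 1) = j - i := by omega
    have hss2 : (k + 1) - (i + 1) = k - i := by omega
    rw [e1, e2, e3, IH1, IH2, hss, hss2]
    by_cases hik : i < k
    · by_cases hij : i < j
      · have hk : (sigmaIter f (k - (i+1))).comp f = sigmaIter f (k - i) := by
          have h1 : k - i = (k - (i+1)) + 1 := by omega
          rw [h1]; rfl
        have hj : (sigmaIter f (j - (i+1))).comp f = sigmaIter f (j - i) := by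
          have h1 : j - i = (j - (i+1)) + 1 := by omega
          rw [h1]; rfl
        simp only [add_comp, mul_comp, sub_comp, X_comp, hk, hj]
        ring
      · rw [heisC_vanish2 f k j (i+1) (by omega)]
        simp only [add_comp, mul_comp, sub_comp, X_comp, zero_comp]
        ring
    · rw [heisC_vanish1 f k j (i+1) (by omega)]
      simp only [add_comp, mul_comp, sub_comp, X_comp, zero_comp]
      ring

lemma heisC_symm : ∀ k j i, heisC f k j i = heisC f j k i
  | 0, j, 0 => by rw [heisC_zero, heisC_zero]
  | 0, j, i + 1 => by
    rw [heisC_vanish1 f 0 j (i+1) (by omega), heisC_vanish2 f j 0 (i+1) (by omega)]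
  | k + 1, j, 0 => by rw [heisC_zero, heisC_zero]
  | k + 1, j, i + 1 => by
    have e1 : heisC f (k+1) j (i+1) =
        (heisC f k j (i+1)).comp f + (sigmaIter f (j - i) - X) * heisC f k j i := rfl
    rw [e1, heisC_symm k j (i+1), heisC_symm k j i, ← heisC_jrec f j k i]

/-- term in the expansion of y^k x^j -/
def TA (f : ℂ[X]) (k j i : ℕ) : GHA f :=
  (ghaX f) ^ (j - i) * aeval (ghaH f) (heisC f k j i) * (ghaY f) ^ (k - i)

def SA (f : ℂ[X]) (k j i : ℕ) : GHA f :=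
  (ghaX f) ^ (j - i) * aeval (ghaH f) ((heisC f k j i).comp f) * (ghaY f) ^ (k + 1 - i)

def SB (f : ℂ[X]) (k j i : ℕ) : GHA f :=
  (ghaX f) ^ (j - (i + 1)) * aeval (ghaH f) ((sigmaIter f (j - i) - X) * heisC f k j i)
    * (ghaY f) ^ (k + 1 - (i + 1))

lemma step_term (k j i : ℕ) (hi : i ≤ k) :
    ghaY f * TA f k j i = SA f k j i + SB f k j i := by
  unfold TA SA SB
  have h1 : k - i + 1 = k + 1 - i := by omega
  have h2 : j - i - 1 = j - (i + 1) := by omega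
  have h3 : k - i = k + 1 - (i + 1) := by omega
  rw [← mul_assoc, ← mul_assoc, y_mul_xpow' f (j - i), add_mul, add_mul]
  congr 1
  · rw [mul_assoc ((ghaX f) ^ (j - i)) (ghaY f), y_mul_aeval, ← mul_assoc, mul_assoc,
      ← pow_succ', h1]
  · rw [mul_assoc ((ghaX f) ^ (j - i - 1)), ← map_mul, h2, h3]

lemma TA_succ_eq (k j i : ℕ) : TA f (k + 1) j (i + 1) = SA f k j (i + 1) + SB f k j i := by
  unfold TA SA SB
  have e : heisC f (k + 1) j (i + 1) =
      (heisC f k j (i + 1)).comp f + (sigmaIter f (j - i) - X) * heisC f k j i := rfl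
  rw [e, map_add, mul_add, add_mul]

lemma TA_zero_eq (k j : ℕ) : TA f (k + 1) j 0 = SA f k j 0 := rfl

lemma SA_top (k j : ℕ) : SA f k j (k + 1) = 0 := by
  unfold SA
  rw [heisC_vanish1 f k j (k + 1) (by omega)]
  simp

lemma ypow_mul_xpow (k j : ℕ) :
    (ghaY f) ^ k * (ghaX f) ^ j = ∑ i ∈ Finset.range (k + 1), TA f k j i := by
  induction k with
  | zero => simp [TA, heisC_zero]
  | succ k ih =>
    have hy : (ghaY f) ^ (k + 1) * (ghaX f) ^ j = ghaY f * ((ghaY f) ^ k * (ghaX f) ^ j) := by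
      rw [pow_succ', mul_assoc]
    rw [hy, ih, Finset.mul_sum,
      Finset.sum_congr rfl (fun i hi => step_term f k j i (by
        have := Finset.mem_range.mp hi; omega)),
      Finset.sum_add_distrib]
    conv_rhs => rw [Finset.sum_range_succ']
    rw [Finset.sum_congr rfl (fun i (_ : i ∈ Finset.range (k + 1)) => TA_succ_eq f k j i),
      Finset.sum_add_distrib, TA_zero_eq]
    have hA : (∑ i ∈ Finset.range (k + 1), SA f k j (i + 1)) + SA f k j 0
        = ∑ i ∈ Finset.range (k + 1), SA f k j i := by
      rw [← Finset.sum_range_succ', Finset.sum_range_succ, SA_top, add_zero]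
    rw [← hA]
    abel

/-- term in the product expansion -/
def PT (f : ℂ[X]) (k j i : ℕ) (g g' : ℂ[X]) : GHA f :=
  (ghaX f) ^ (k + (j - i)) *
    aeval (ghaH f) (g.comp (sigmaIter f (j - i)) * heisC f k j i * g'.comp (sigmaIter f (k - i))) *
    (ghaY f) ^ ((k - i) + j)

lemma prod_term (k j i : ℕ) (g g' : ℂ[X]) :
    ((ghaX f) ^ k * aeval (ghaH f) g) * TA f k j i * (aeval (ghaH f) g' * (ghaY f) ^ j)
      = PT f k j i g g' := by
  unfold TA PT
  have hg : ∀ z : GHA f, aeval (ghaH f) g * ((ghaX f) ^ (j - i) * z)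
      = (ghaX f) ^ (j - i) * (aeval (ghaH f) (g.comp (sigmaIter f (j - i))) * z) := by
    intro z; rw [← mul_assoc, aeval_mul_xpow, mul_assoc]
  have hg' : ∀ z : GHA f, (ghaY f) ^ (k - i) * (aeval (ghaH f) g' * z)
      = aeval (ghaH f) (g'.comp (sigmaIter f (k - i))) * ((ghaY f) ^ (k - i) * z) := by
    intro z; rw [← mul_assoc, ypow_mul_aeval, mul_assoc]
  simp only [map_mul, pow_add, mul_assoc]
  rw [hg, hg']

lemma prod_formula (k j : ℕ) (g g' : ℂ[X]) :
    ((ghaX f) ^ k * aeval (ghaH f) g * (ghaY f) ^ k)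
        * ((ghaX f) ^ j * aeval (ghaH f) g' * (ghaY f) ^ j)
      = ∑ i ∈ Finset.range (k + 1), PT f k j i g g' := by
  have h0 : ((ghaX f) ^ k * aeval (ghaH f) g * (ghaY f) ^ k)
        * ((ghaX f) ^ j * aeval (ghaH f) g' * (ghaY f) ^ j)
      = ((ghaX f) ^ k * aeval (ghaH f) g) * ((ghaY f) ^ k * (ghaX f) ^ j)
          * (aeval (ghaH f) g' * (ghaY f) ^ j) := by
    simp only [mul_assoc]
  rw [h0, ypow_mul_xpow, Finset.mul_sum, Finset.sum_mul]
  exact Finset.sum_congr rfl (fun i _ => prod_term f k j i g g')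

lemma PT_zero (k j i : ℕ) (g g' : ℂ[X]) (h : k < i ∨ j < i) : PT f k j i g g' = 0 := by
  unfold PT
  rcases h with h | h
  · rw [heisC_vanish1 f k j i h]; simp
  · rw [heisC_vanish2 f k j i h]; simp

lemma PT_symm (k j i : ℕ) (g g' : ℂ[X]) (h1 : i ≤ k) (h2 : i ≤ j) :
    PT f k j i g g' = PT f j k i g' g := by
  unfold PT
  have e1 : k + (j - i) = j + (k - i) := by omega
  have e2 : (k - i) + j = (j - i) + k := by omega
  rw [e1, e2, heisC_symm f k j i,
    show g.comp (sigmaIter f (j - i)) * heisC f j k i * g'.comp (sigmaIter f (k - i))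
      = g'.comp (sigmaIter f (k - i)) * heisC f j k i * g.comp (sigmaIter f (j - i)) from by ring]

lemma comm_main (k j : ℕ) (g g' : ℂ[X]) :
    ((ghaX f) ^ k * aeval (ghaH f) g * (ghaY f) ^ k)
        * ((ghaX f) ^ j * aeval (ghaH f) g' * (ghaY f) ^ j)
      = ((ghaX f) ^ j * aeval (ghaH f) g' * (ghaY f) ^ j)
        * ((ghaX f) ^ k * aeval (ghaH f) g * (ghaY f) ^ k) := by
  rw [prod_formula f k j g g', prod_formula f j k g' g]
  have hk : Finset.range (k + 1) ⊆ Finset.range (k + j + 1) := Finset.range_subset_range.mpr (by omega)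
  have hj : Finset.range (j + 1) ⊆ Finset.range (k + j + 1) := Finset.range_subset_range.mpr (by omega)
  rw [Finset.sum_subset hk (fun i _ hi => PT_zero f k j i g g'
      (Or.inl (by simp only [Finset.mem_range, not_lt] at hi; omega))),
    Finset.sum_subset hj (fun i _ hi => PT_zero f j k i g' g
      (Or.inl (by simp only [Finset.mem_range, not_lt] at hi; omega)))]
  refine Finset.sum_congr rfl (fun i _ => ?_)
  by_cases h1 : i ≤ k
  · by_cases h2 : i ≤ j
    · exact PT_symm f k j i g g' h1 h2
    · rw [PT_zero f k j i g g' (Or.inr (by omega)), PT_zero f j k i g' g (Or.inl (by omega))]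
  · rw [PT_zero f k j i g g' (Or.inl (by omega)), PT_zero f j k i g' g (Or.inr (by omega))]

def ghaSet (f : ℂ[X]) : Set (GHA f) :=
  {a : GHA f | ∃ k m : ℕ, a = (ghaX f) ^ k * (ghaH f) ^ m * (ghaY f) ^ k}

lemma mem_span_basic (g : ℂ[X]) (k : ℕ) :
    (ghaX f) ^ k * aeval (ghaH f) g * (ghaY f) ^ k ∈ Submodule.span ℂ (ghaSet f) := by
  induction g using Polynomial.induction_on' with
  | add p q hp hq => rw [map_add, mul_add, add_mul]; exact add_mem hp hq
  | monomial n a =>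
    have h : (ghaX f) ^ k * aeval (ghaH f) (monomial n a) * (ghaY f) ^ k
        = a • ((ghaX f) ^ k * (ghaH f) ^ n * (ghaY f) ^ k) := by
      rw [aeval_monomial, Algebra.smul_def]
      simp only [← mul_assoc]
      rw [← Algebra.commutes]
    rw [h]
    exact Submodule.smul_mem _ _ (Submodule.subset_span ⟨k, n, rfl⟩)

lemma PT_mem (k j i : ℕ) (g g' : ℂ[X]) :
    PT f k j i g g' ∈ Submodule.span ℂ (ghaSet f) := by
  by_cases h : i ≤ k ∧ i ≤ j
  · unfold PT
    rw [show (k - i) + j = k + (j - i) from by omega]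
    exact mem_span_basic f _ _
  · rw [PT_zero f k j i g g' (by omega)]
    exact Submodule.zero_mem _

lemma gprod_mem (k j : ℕ) (g g' : ℂ[X]) :
    ((ghaX f) ^ k * aeval (ghaH f) g * (ghaY f) ^ k)
        * ((ghaX f) ^ j * aeval (ghaH f) g' * (ghaY f) ^ j) ∈ Submodule.span ℂ (ghaSet f) := by
  rw [prod_formula]
  exact Submodule.sum_mem _ (fun i _ => PT_mem f k j i g g')

lemma gen_form' (p : GHA f) (hp : p ∈ ghaSet f) :
    ∃ (k : ℕ) (g : ℂ[X]), p = (ghaX f) ^ k * aeval (ghaH f) g * (ghaY f) ^ k := by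
  obtain ⟨k, m, rfl⟩ := hp
  exact ⟨k, X ^ m, by rw [map_pow, aeval_X]⟩

lemma main_span : ∀ a ∈ Submodule.span ℂ (ghaSet f), ∀ b ∈ Submodule.span ℂ (ghaSet f),
    a * b = b * a ∧ a * b ∈ Submodule.span ℂ (ghaSet f) := by
  intro a ha
  induction ha using Submodule.span_induction with
  | mem p hp =>
    intro b hb
    induction hb using Submodule.span_induction with
    | mem q hq =>
      obtain ⟨k, g, rfl⟩ := gen_form' f p hp
      obtain ⟨j, g', rfl⟩ := gen_form' f q hq
      exact ⟨comm_main f k j g g', gprod_mem f k j g g'⟩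
    | zero => simp [Submodule.zero_mem]
    | add u v hu hv ihu ihv =>
      obtain ⟨h1, m1⟩ := ihu
      obtain ⟨h2, m2⟩ := ihv
      exact ⟨by rw [mul_add, add_mul, h1, h2], by rw [mul_add]; exact add_mem m1 m2⟩
    | smul c u hu ihu =>
      obtain ⟨h1, m1⟩ := ihu
      refine ⟨?_, ?_⟩
      · rw [mul_smul_comm, smul_mul_assoc, h1]
      · rw [mul_smul_comm]; exact Submodule.smul_mem _ _ m1
  | zero => intro b hb; simp [Submodule.zero_mem]
  | add u v hu hv ihu ihv =>
    intro b hb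
    obtain ⟨h1, m1⟩ := ihu b hb
    obtain ⟨h2, m2⟩ := ihv b hb
    exact ⟨by rw [add_mul, mul_add, h1, h2], by rw [add_mul]; exact add_mem m1 m2⟩
  | smul c u hu ihu =>
    intro b hb
    obtain ⟨h1, m1⟩ := ihu b hb
    refine ⟨?_, ?_⟩
    · rw [smul_mul_assoc, mul_smul_comm, h1]
    · rw [smul_mul_assoc]; exact Submodule.smul_mem _ _ m1

end Aux

/-- Elements x^k g(h) y^k pairwise commute, hence the span H(f)_0 of the
monomials x^k h^m y^k is a commutative subalgebra of H(f). -/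
theorem gha_degree_zero_commutative (f : ℂ[X]) :
    (∀ (g g' : ℂ[X]) (j k : ℕ),
        Commute ((ghaX f) ^ k * aeval (ghaH f) g * (ghaY f) ^ k)
          ((ghaX f) ^ j * aeval (ghaH f) g' * (ghaY f) ^ j)) ∧
    (1 : GHA f) ∈ Submodule.span ℂ
        {a : GHA f | ∃ k m : ℕ, a = (ghaX f) ^ k * (ghaH f) ^ m * (ghaY f) ^ k} ∧
    (∀ a ∈ Submodule.span ℂ
        {a : GHA f | ∃ k m : ℕ, a = (ghaX f) ^ k * (ghaH f) ^ m * (ghaY f) ^ k},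
      ∀ b ∈ Submodule.span ℂ
        {a : GHA f | ∃ k m : ℕ, a = (ghaX f) ^ k * (ghaH f) ^ m * (ghaY f) ^ k},
      a * b = b * a ∧ a * b ∈ Submodule.span ℂ
        {a : GHA f | ∃ k m : ℕ, a = (ghaX f) ^ k * (ghaH f) ^ m * (ghaY f) ^ k}) := by
  refine ⟨fun g g' j k => comm_main f k j g g', ?_, main_span f⟩
  exact Submodule.subset_span ⟨0, 0, by simp⟩
end
end

section
/- If f ∈ ℂ[h] satisfies f(h) ∈ h·ℂ[h] and deg f ≠ 1, then the left ideals I_n = Σ_{i=0}^n H(f)·h y^i of H(f) form a strictly ascending chain: h y^{n+1} ∉ I_n for all n ≥ 0. -/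
open Polynomial MulOpposite

noncomputable section

/-!
H(f) acts on its PBW coordinates: `Finsupp.single (a, k) p` stands for `x^a p(h) y^k`, and
`h x^a = x^a σ^a(h)`, `y x^a = x^a y + x^(a-1) (σ^a(h) - h)`. If `U k` is `(h)` for `k ≤ n` and
`(f)` for `k > n`, the vectors whose column-`k` coefficients lie in `U k` form an invariant
subspace: `h`, `x` and the correction term of `y` stay in the same column, and the leading term
of `y` moves `p ∈ (h)` to `p ∘ f ∈ (f)` in the next column. Applied to `1`, the generators
`h y^i` (`i ≤ n`) of `I_n` land in this subspace, while `h y^(n+1)` gives `h` in column `n + 1`,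
and `h ∉ (f)` because `h ∣ f` and `deg f ≠ 1`.
-/

lemma Polynomial.natDegree_eq_one_of_X_dvd_of_dvd_X {R : Type*} [CommRing R] [IsDomain R]
    {p : R[X]} (hXp : X ∣ p) (hpX : p ∣ X) : p.natDegree = 1 := by
  rw [natDegree_eq_of_degree_eq (degree_eq_degree_of_associated (associated_of_dvd_dvd hpX hXp)),
    natDegree_X]

namespace GHA

lemma sigmaIter_zero (f : ℂ[X]) : sigmaIter f 0 = X := rfl

lemma sigmaIter_succ (f : ℂ[X]) (a : ℕ) : sigmaIter f (a + 1) = (sigmaIter f a).comp f := rfl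

lemma sigmaIter_one (f : ℂ[X]) : sigmaIter f 1 = f := X_comp

lemma sigmaIter_succ' (f : ℂ[X]) (a : ℕ) : sigmaIter f (a + 1) = f.comp (sigmaIter f a) := by
  induction a with
  | zero => rw [sigmaIter_one, sigmaIter_zero, comp_X]
  | succ a ih => rw [sigmaIter_succ, ih, comp_assoc, ← sigmaIter_succ, ← ih]

abbrev PBWSpace : Type := (ℕ × ℕ) →₀ ℂ[X]

variable (f : ℂ[X])

def pbwX : Module.End ℂ PBWSpace := Finsupp.lmapDomain ℂ[X] ℂ fun c => (c.1 + 1, c.2)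

def pbwH : Module.End ℂ PBWSpace :=
  Finsupp.lsum ℂ fun c => Finsupp.lsingle c ∘ₗ LinearMap.mulLeft ℂ (sigmaIter f c.1)

/-- At `a = 0` the truncated `a - 1` is harmless: the coefficient `σ^0(h) - h` vanishes. -/
def pbwY : Module.End ℂ PBWSpace :=
  Finsupp.lsum ℂ fun c =>
    Finsupp.lsingle (c.1, c.2 + 1) ∘ₗ (aeval f).toLinearMap +
      Finsupp.lsingle (c.1 - 1, c.2) ∘ₗ LinearMap.mulLeft ℂ (sigmaIter f c.1 - X)

@[simp] lemma pbwX_single (a k : ℕ) (p : ℂ[X]) :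
    pbwX (Finsupp.single (a, k) p) = Finsupp.single (a + 1, k) p := by
  simp [pbwX]

@[simp] lemma pbwH_single (a k : ℕ) (p : ℂ[X]) :
    pbwH f (Finsupp.single (a, k) p) = Finsupp.single (a, k) (sigmaIter f a * p) := by
  simp [pbwH]

lemma pbwY_single (a k : ℕ) (p : ℂ[X]) :
    pbwY f (Finsupp.single (a, k) p) =
      Finsupp.single (a, k + 1) (p.comp f) +
        Finsupp.single (a - 1, k) ((sigmaIter f a - X) * p) := by
  simp [pbwY, comp_eq_aeval]

@[simp] lemma pbwY_single_zero (k : ℕ) (p : ℂ[X]) :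
    pbwY f (Finsupp.single (0, k) p) = Finsupp.single (0, k + 1) (p.comp f) := by
  simp [pbwY_single, sigmaIter_zero]

@[simp] lemma pbwY_single_succ (a k : ℕ) (p : ℂ[X]) :
    pbwY f (Finsupp.single (a + 1, k) p) =
      Finsupp.single (a + 1, k + 1) (p.comp f) +
        Finsupp.single (a, k) ((sigmaIter f (a + 1) - X) * p) :=
  pbwY_single f (a + 1) k p

lemma pbwH_pow_single (m a k : ℕ) (p : ℂ[X]) :
    (pbwH f ^ m) (Finsupp.single (a, k) p) = Finsupp.single (a, k) (sigmaIter f a ^ m * p) := by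
  induction m with
  | zero => simp
  | succ m ih =>
    rw [pow_succ', Module.End.mul_apply, ih, pbwH_single, ← mul_assoc, ← pow_succ']

lemma aeval_pbwH_single (q : ℂ[X]) (a k : ℕ) (p : ℂ[X]) :
    aeval (pbwH f) q (Finsupp.single (a, k) p) =
      Finsupp.single (a, k) (q.comp (sigmaIter f a) * p) := by
  induction q using Polynomial.induction_on' with
  | add u v hu hv => simp [hu, hv, add_mul]
  | monomial m c =>
    rw [aeval_monomial, Module.End.mul_apply, pbwH_pow_single, Module.algebraMap_end_apply,
      Finsupp.smul_single, ← C_mul_X_pow_eq_monomial, mul_comp, C_comp, X_pow_comp,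
      smul_eq_C_mul, mul_assoc]

lemma pbwH_mul_pbwX : pbwH f * pbwX = pbwX * aeval (pbwH f) f := by
  refine Finsupp.lhom_ext fun ⟨a, k⟩ p => ?_
  simp only [Module.End.mul_apply, pbwX_single, pbwH_single, aeval_pbwH_single, sigmaIter_succ']

lemma pbwY_mul_pbwH : pbwY f * pbwH f = aeval (pbwH f) f * pbwY f := by
  refine Finsupp.lhom_ext fun ⟨a, k⟩ p => ?_
  cases a with
  | zero =>
    simp only [Module.End.mul_apply, pbwH_single, pbwY_single_zero, aeval_pbwH_single, mul_comp,
      sigmaIter_zero, X_comp, comp_X]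
  | succ a =>
    simp only [Module.End.mul_apply, pbwH_single, pbwY_single_succ, map_add, aeval_pbwH_single,
      mul_comp, ← sigmaIter_succ, ← sigmaIter_succ', mul_left_comm (sigmaIter f (a + 1))]

lemma pbwY_mul_pbwX : pbwY f * pbwX = pbwX * pbwY f + (aeval (pbwH f) f - pbwH f) := by
  refine Finsupp.lhom_ext fun ⟨a, k⟩ p => ?_
  cases a with
  | zero =>
    simp only [Module.End.mul_apply, LinearMap.add_apply, LinearMap.sub_apply, pbwX_single,
      pbwY_single_zero, pbwY_single_succ, aeval_pbwH_single, pbwH_single, sigmaIter_zero, comp_X,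
      zero_add, sigmaIter_one, ← Finsupp.single_sub, sub_mul]
  | succ a =>
    simp only [Module.End.mul_apply, LinearMap.add_apply, LinearMap.sub_apply, pbwX_single,
      pbwY_single_succ, map_add, aeval_pbwH_single, pbwH_single, ← sigmaIter_succ',
      ← Finsupp.single_sub]
    rw [add_assoc (Finsupp.single _ _), ← Finsupp.single_add]
    congr 2
    ring

def pbwRep : GHA f →ₐ[ℂ] Module.End ℂ PBWSpace :=
  RingQuot.liftAlgHom ℂ ⟨FreeAlgebra.lift ℂ ![pbwX, pbwY f, pbwH f], by
    intro u v huv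
    induction huv with
    | hx => simpa [← aeval_algHom_apply] using pbwH_mul_pbwX f
    | yh => simpa [← aeval_algHom_apply] using pbwY_mul_pbwH f
    | yx => simpa [← aeval_algHom_apply] using pbwY_mul_pbwX f⟩

lemma pbwRep_mk (s : FreeAlgebra ℂ (Fin 3)) :
    pbwRep f (RingQuot.mkAlgHom ℂ (HeisRel f) s) =
      FreeAlgebra.lift ℂ ![pbwX, pbwY f, pbwH f] s :=
  RingQuot.liftAlgHom_mkAlgHom_apply _ _ _ _

@[simp] lemma pbwRep_ghaY : pbwRep f (ghaY f) = pbwY f := by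
  simp [ghaY, pbwRep_mk]

@[simp] lemma pbwRep_ghaH : pbwRep f (ghaH f) = pbwH f := by
  simp [ghaH, pbwRep_mk]

lemma pbwY_pow_single_zero (i : ℕ) :
    (pbwY f ^ i) (Finsupp.single (0, 0) 1) = Finsupp.single (0, i) 1 := by
  induction i with
  | zero => simp
  | succ i ih => rw [pow_succ', Module.End.mul_apply, ih, pbwY_single_zero, one_comp]

def columnSubmodule (U : ℕ → Ideal ℂ[X]) : Submodule ℂ PBWSpace where
  carrier := {φ | ∀ c : ℕ × ℕ, φ c ∈ U c.2}
  add_mem' hφ hψ c := add_mem (hφ c) (hψ c)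
  zero_mem' _ := zero_mem _
  smul_mem' a _ hφ c := Submodule.smul_of_tower_mem _ a (hφ c)

variable {U : ℕ → Ideal ℂ[X]}

lemma single_mem_columnSubmodule_iff {c : ℕ × ℕ} {p : ℂ[X]} :
    Finsupp.single c p ∈ columnSubmodule U ↔ p ∈ U c.2 := by
  refine ⟨fun h => by simpa using h c, fun hp d => ?_⟩
  rw [Finsupp.single_apply]
  split_ifs with hcd
  · exact hcd ▸ hp
  · exact zero_mem _

lemma map_mem_columnSubmodule (T : Module.End ℂ PBWSpace)
    (hT : ∀ c p, p ∈ U c.2 → T (Finsupp.single c p) ∈ columnSubmodule U)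
    {φ : PBWSpace} (hφ : φ ∈ columnSubmodule U) : T φ ∈ columnSubmodule U := by
  rw [← φ.sum_single, map_finsuppSum]
  exact Submodule.finsuppSum_mem _ _ _ _ fun c _ => hT c _ (hφ c)

lemma pbwX_mem_columnSubmodule {φ : PBWSpace} (hφ : φ ∈ columnSubmodule U) :
    pbwX φ ∈ columnSubmodule U :=
  map_mem_columnSubmodule _ (fun ⟨a, k⟩ _ hp => by
    rwa [pbwX_single, single_mem_columnSubmodule_iff]) hφ

lemma pbwH_mem_columnSubmodule {φ : PBWSpace} (hφ : φ ∈ columnSubmodule U) :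
    pbwH f φ ∈ columnSubmodule U :=
  map_mem_columnSubmodule _ (fun ⟨a, k⟩ _ hp => by
    rw [pbwH_single, single_mem_columnSubmodule_iff]
    exact Ideal.mul_mem_left _ _ hp) hφ

variable {f}

lemma pbwY_mem_columnSubmodule (hU : ∀ k p, p ∈ U k → p.comp f ∈ U (k + 1)) {φ : PBWSpace}
    (hφ : φ ∈ columnSubmodule U) : pbwY f φ ∈ columnSubmodule U :=
  map_mem_columnSubmodule _ (fun ⟨a, k⟩ _ hp => by
    rw [pbwY_single]
    exact add_mem (single_mem_columnSubmodule_iff.2 (hU k _ hp))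
      (single_mem_columnSubmodule_iff.2 (Ideal.mul_mem_left _ _ hp))) hφ

lemma pbwRep_mem_columnSubmodule (hU : ∀ k p, p ∈ U k → p.comp f ∈ U (k + 1)) (r : GHA f)
    {φ : PBWSpace} (hφ : φ ∈ columnSubmodule U) : pbwRep f r φ ∈ columnSubmodule U := by
  obtain ⟨s, rfl⟩ := RingQuot.mkAlgHom_surjective ℂ (HeisRel f) r
  rw [pbwRep_mk]
  induction s using FreeAlgebra.induction generalizing φ with
  | grade0 c => simpa using Submodule.smul_mem _ c hφ
  | grade1 i =>
    rw [FreeAlgebra.lift_ι_apply]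
    fin_cases i
    · exact pbwX_mem_columnSubmodule hφ
    · exact pbwY_mem_columnSubmodule hU hφ
    · exact pbwH_mem_columnSubmodule f hφ
  | mul s t hs ht =>
    rw [map_mul, Module.End.mul_apply]
    exact hs (ht hφ)
  | add s t hs ht =>
    rw [map_add, LinearMap.add_apply]
    exact add_mem (hs hφ) (ht hφ)

lemma pbwRep_mem_columnSubmodule_of_mem_span (hU : ∀ k p, p ∈ U k → p.comp f ∈ U (k + 1))
    {S : Set (GHA f)} {φ : PBWSpace} (hS : ∀ a ∈ S, pbwRep f a φ ∈ columnSubmodule U)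
    {r : GHA f} (hr : r ∈ Submodule.span (GHA f) S) : pbwRep f r φ ∈ columnSubmodule U := by
  induction hr using Submodule.span_induction with
  | mem a ha => exact hS a ha
  | zero => simp
  | add a b _ _ ha hb => simpa using add_mem ha hb
  | smul a b _ hb =>
    rw [smul_eq_mul, map_mul, Module.End.mul_apply]
    exact pbwRep_mem_columnSubmodule hU a hb

variable (f) in
def chainColumnIdeal (n k : ℕ) : Ideal ℂ[X] :=
  if k ≤ n then Ideal.span {X} else Ideal.span {f}

lemma comp_mem_chainColumnIdeal (hdvd : X ∣ f) {n k : ℕ} {p : ℂ[X]}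
    (hp : p ∈ chainColumnIdeal f n k) : p.comp f ∈ chainColumnIdeal f n (k + 1) := by
  have hXp : X ∣ p := by
    unfold chainColumnIdeal at hp
    split_ifs at hp
    · exact Ideal.mem_span_singleton.1 hp
    · exact hdvd.trans (Ideal.mem_span_singleton.1 hp)
  have hfp : f ∣ p.comp f := by
    obtain ⟨q, rfl⟩ := hXp
    simp [mul_comp]
  unfold chainColumnIdeal
  split_ifs
  · exact Ideal.mem_span_singleton.2 (hdvd.trans hfp)
  · exact Ideal.mem_span_singleton.2 hfp

lemma pbwRep_ghaH_mul_ghaY_pow_single_zero (i : ℕ) :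
    pbwRep f (ghaH f * ghaY f ^ i) (Finsupp.single (0, 0) 1) = Finsupp.single (0, i) X := by
  rw [map_mul, map_pow, pbwRep_ghaH, pbwRep_ghaY, Module.End.mul_apply, pbwY_pow_single_zero,
    pbwH_single, mul_one, sigmaIter_zero]

end GHA

/-- If f ∈ h·ℂ[h] and deg f ≠ 1, then h y^(n+1) ∉ I_n = Σ_{i≤n} H(f)·h y^i,
so the left ideals I_n form a strictly ascending chain. -/
theorem gha_not_noetherian_chain (f : ℂ[X]) (hdvd : X ∣ f) (hdeg : f.natDegree ≠ 1)
    (n : ℕ) :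
    ghaH f * (ghaY f) ^ (n + 1) ∉
      Submodule.span (GHA f) {a : GHA f | ∃ i ≤ n, a = ghaH f * (ghaY f) ^ i} := by
  intro hmem
  have hgens : ∀ a ∈ {a : GHA f | ∃ i ≤ n, a = ghaH f * (ghaY f) ^ i},
      GHA.pbwRep f a (Finsupp.single (0, 0) 1) ∈
        GHA.columnSubmodule (GHA.chainColumnIdeal f n) := by
    rintro _ ⟨i, hi, rfl⟩
    rw [GHA.pbwRep_ghaH_mul_ghaY_pow_single_zero, GHA.single_mem_columnSubmodule_iff,
      GHA.chainColumnIdeal, if_pos hi]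
    exact Ideal.mem_span_singleton_self X
  have hcolumn := GHA.pbwRep_mem_columnSubmodule_of_mem_span (U := GHA.chainColumnIdeal f n)
    (fun _ _ => GHA.comp_mem_chainColumnIdeal hdvd) hgens hmem
  rw [GHA.pbwRep_ghaH_mul_ghaY_pow_single_zero, GHA.single_mem_columnSubmodule_iff,
    GHA.chainColumnIdeal, if_neg (by omega), Ideal.mem_span_singleton] at hcolumn
  exact hdeg (Polynomial.natDegree_eq_one_of_X_dvd_of_dvd_X hdvd hcolumn)
end
end

section
/- Let f ∈ ℂ[h] with f(h) ∈ h·ℂ[h] and such that either f = 0 or deg f > 1. If g_0, …, g_n ∈ ℂ[h] satisfy h = Σ_{i=0}^n g_i(h)·σ^{n+1−i}(h), where σ(h) = f(h), then a contradiction follows; i.e., no such g_i exist. -/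
open Polynomial

noncomputable section

/-- If f ∈ h·ℂ[h] and f = 0 or deg f > 1, then h cannot be written as
Σ_{i=0}^n g_i(h)·σ^(n+1-i)(h). -/
theorem no_such_decomposition (f : ℂ[X]) (hdvd : X ∣ f)
    (hf : f = 0 ∨ 1 < f.natDegree) (n : ℕ) (g : ℕ → ℂ[X])
    (h : (X : ℂ[X]) = ∑ i ∈ Finset.range (n + 1), g i * sigmaIter f (n + 1 - i)) :
    False := by
  have key : ∀ m, f ∣ sigmaIter f (m + 1) := by
    intro m
    induction m with
    | zero => simp [sigmaIter]
    | succ k ih =>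
      show f ∣ (sigmaIter f (k + 1)).comp f
      obtain ⟨q, hq⟩ := hdvd.trans ih
      obtain ⟨r, hr⟩ := hdvd
      rw [hq, mul_comp, X_comp]
      exact ⟨q.comp f, rfl⟩
  have hfX : f ∣ X := by
    rw [h]
    refine Finset.dvd_sum fun i hi => ?_
    have hi' := Finset.mem_range.mp hi
    have : n + 1 - i = (n - i) + 1 := by omega
    rw [this]
    exact Dvd.dvd.mul_left (key (n - i)) _
  rcases hf with rfl | hdeg
  · exact X_ne_zero (zero_dvd_iff.mp hfX)
  · have hle := natDegree_le_of_dvd hfX X_ne_zero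
    simp [natDegree_X] at hle
    omega
end
end

section
/- If f ∈ ℂ[h] with deg f > 1, then the algebra H(f) is neither left nor right Noetherian. -/
open Polynomial MulOpposite

noncomputable section

/-! Choose a backward orbit `β` of `f` (`f (β (k + 1)) = β k`) avoiding the periodic points and
the critical values of `f`; this is possible because both sets, with the forward orbits of the
critical values, are countable while `ℂ` is not. The left ideals generated by `(h - β k) y ^ k`,
`k ≤ n`, then increase strictly with `n`: take `μ ∉ {β 0, …, β (n + 1)}` with `f μ = β n`, and
let `H(f)` act on `ℕ →₀ ℂ` with `x` raising indices, `y` lowering them and `h` acting on `e i` by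
`f^[i] μ`. The weight of `e (n + 1 - k)` is `β k` for `k ≤ n`, so `(h - β k) y ^ k` kills
`e (n + 1)`, while `(h - β (n + 1)) y ^ (n + 1)` does not. The anti-automorphism exchanging `x`
and `y` turns this into the same statement for right ideals. -/

open Function

section BackwardOrbit

variable {α : Type*} {g : α → α} {β : ℕ → α}

theorem iterate_apply_of_backward_orbit (hβ : ∀ k, g (β (k + 1)) = β k) (k m : ℕ) :
    g^[m] (β (k + m)) = β k := by
  induction m with
  | zero => rfl
  | succ m ih => rw [iterate_succ_apply, ← add_assoc, hβ, ih]

theorem iterate_succ_sub_apply_of_backward_orbit (hβ : ∀ k, g (β (k + 1)) = β k) {n : ℕ} {s : α}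
    (hs : g s = β n) {k : ℕ} (hk : k ≤ n) : g^[n + 1 - k] s = β k := by
  obtain ⟨j, rfl⟩ := Nat.exists_eq_add_of_le hk
  rw [show k + j + 1 - k = j + 1 by omega, iterate_succ_apply, hs,
    iterate_apply_of_backward_orbit hβ]

theorem ne_of_backward_orbit (hβ : ∀ k, g (β (k + 1)) = β k) {n : ℕ} {s : α} (hs : g s = β n)
    {l : ℕ} (hl : l ≤ n) (hper : β l ∉ periodicPts g) : s ≠ β l := by
  rintro rfl
  exact hper ⟨n + 1 - l, by omega, iterate_succ_sub_apply_of_backward_orbit hβ hs hl⟩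

end BackwardOrbit

namespace Polynomial

variable {K : Type*} [Field K] (f : K[X])

def criticalValues : Set K := f.eval '' {z | f.derivative.IsRoot z}

theorem finite_criticalValues [CharZero K] (hf : f.natDegree ≠ 0) : (criticalValues f).Finite :=
  (finite_setOfPred_isRoot (derivative_ne_zero.2 hf)).image _

theorem finite_setOf_isPeriodicPt (hf : 1 < f.natDegree) {n : ℕ} (hn : 0 < n) :
    {z | IsPeriodicPt f.eval n z}.Finite := by
  have hne : f.comp^[n] X - X ≠ 0 := by
    rw [sub_ne_zero]
    intro h
    have := congrArg natDegree h
    rw [natDegree_iterate_comp, natDegree_X, mul_one] at this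
    exact (Nat.one_lt_pow hn.ne' hf).ne' this
  refine (finite_setOfPred_isRoot hne).subset fun z hz => ?_
  simpa [sub_eq_zero] using hz.eq

theorem countable_periodicPts (hf : 1 < f.natDegree) : (periodicPts f.eval).Countable := by
  have : periodicPts f.eval = ⋃ n : ℕ, {z | IsPeriodicPt f.eval (n + 1) z} := by
    ext z
    simp only [mem_periodicPts, Set.mem_iUnion, Set.mem_ofPred_eq]
    exact ⟨fun ⟨n, hn, h⟩ => ⟨n - 1, by rwa [Nat.sub_add_cancel hn]⟩,
      fun ⟨n, h⟩ => ⟨n + 1, n.succ_pos, h⟩⟩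
  rw [this]
  exact Set.countable_iUnion fun n => (finite_setOf_isPeriodicPt f hf n.succ_pos).countable

variable [IsAlgClosed K]

theorem exists_ne_eval_eq (hf : 1 < f.natDegree) {w : K} (hw : w ∉ criticalValues f) (r : K) :
    ∃ s ≠ r, f.eval s = w := by
  classical
  by_contra! h
  have hp : f - C w ≠ 0 := fun h0 => by
    have := congrArg natDegree h0
    rw [natDegree_sub_C, natDegree_zero] at this
    omega
  have hroots : ∀ s ∈ (f - C w).roots, r = s := fun s hs => by
    by_contra hrs
    refine h s (Ne.symm hrs) ?_
    simpa [sub_eq_zero] using (mem_roots hp).1 hs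
  have hmult : 1 < (f - C w).rootMultiplicity r := by
    rw [← count_roots, Multiset.count_eq_card.2 hroots, IsAlgClosed.card_roots_eq_natDegree,
      natDegree_sub_C]
    exact hf
  obtain ⟨hr, hr'⟩ := (one_lt_rootMultiplicity_iff_isRoot hp).1 hmult
  refine hw ⟨r, by simpa using hr', ?_⟩
  simpa [sub_eq_zero] using hr

theorem exists_eval_eq_forall_ne (hf : 1 < f.natDegree) {β : ℕ → K}
    (hβ : ∀ k, f.eval (β (k + 1)) = β k) {n : ℕ} (hn : β n ∉ criticalValues f)
    (hper : ∀ l, β l ∉ periodicPts f.eval) : ∃ μ, f.eval μ = β n ∧ ∀ l ≤ n + 1, μ ≠ β l := by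
  obtain ⟨μ, hμ, hμβ⟩ := exists_ne_eval_eq f hf hn (β (n + 1))
  refine ⟨μ, hμβ, fun l hl => ?_⟩
  rcases hl.lt_or_eq with hl | rfl
  exacts [ne_of_backward_orbit hβ hμβ (by omega) (hper l), hμ]

variable [CharZero K] [Uncountable K]

theorem exists_backward_orbit (hf : 1 < f.natDegree) :
    ∃ β : ℕ → K, (∀ k, f.eval (β (k + 1)) = β k) ∧
      ∀ k, β k ∉ criticalValues f ∧ β k ∉ periodicPts f.eval := by
  set bad := (⋃ n : ℕ, f.eval^[n] '' criticalValues f) ∪ periodicPts f.eval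
  have hbad : bad.Countable :=
    (Set.countable_iUnion fun n =>
      ((finite_criticalValues f (by omega)).image _).countable).union (countable_periodicPts f hf)
  obtain ⟨β₀, hβ₀⟩ : badᶜ.Nonempty :=
    Set.nonempty_compl.2 fun h => Set.not_countable_univ (h ▸ hbad)
  have hsurj : Surjective f.eval := IsAlgClosed.eval_surjective (by omega)
  set β : ℕ → K := fun k => (surjInv hsurj)^[k] β₀
  have hβ : ∀ k, f.eval^[k] (β k) = β₀ := fun k => ((rightInverse_surjInv hsurj).iterate k) β₀
  refine ⟨β, fun k => ?_, fun k => ⟨fun hc => hβ₀ ?_, fun hp => hβ₀ ?_⟩⟩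
  · exact (congrArg f.eval (iterate_succ_apply' _ k β₀)).trans (surjInv_eq hsurj _)
  · exact Or.inl (Set.mem_iUnion.2 ⟨k, hβ k ▸ Set.mem_image_of_mem _ hc⟩)
  · obtain ⟨n, hn, hper⟩ := hp
    exact Or.inr ⟨n, hn, hβ k ▸ hper.apply_iterate k⟩

end Polynomial

theorem isNoetherianRing_of_surjective_op {A : Type*} [Semiring A] (τ : A →+* Aᵐᵒᵖ)
    (hτ : Surjective τ) [IsNoetherianRing Aᵐᵒᵖ] : IsNoetherianRing A :=
  isNoetherianRing_of_surjective Aᵐᵒᵖ A ((RingEquiv.opOp A).symm.toRingHom.comp (RingHom.op τ))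
    fun a => by
      obtain ⟨b, hb⟩ := hτ (op a)
      exact ⟨op b, congrArg unop hb⟩

theorem not_isNoetherianRing_of_notMem_span {A : Type*} [Semiring A] (g : ℕ → A)
    (hg : ∀ n, g (n + 1) ∉ Ideal.span (g '' Set.Iic n)) : ¬ IsNoetherianRing A := by
  intro hA
  obtain ⟨n, hn⟩ := monotone_stabilizes_iff_noetherian.2 hA
    ⟨fun n => Ideal.span (g '' Set.Iic n),
      fun _ _ h => Ideal.span_mono (Set.image_mono (Set.Iic_subset_Iic.2 h))⟩
  have hstable : Ideal.span (g '' Set.Iic (n + 1)) = Ideal.span (g '' Set.Iic n) :=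
    (hn (n + 1) n.le_succ).symm
  exact hg n (hstable ▸ Ideal.subset_span ⟨n + 1, Set.mem_Iic.2 le_rfl, rfl⟩)

section Annihilator

variable {A R M : Type*} [Ring A] [CommRing R] [AddCommGroup M] [Module R M]

def annihilatorOf (ρ : A →+* Module.End R M) (v : M) : Ideal A where
  carrier := {a | ρ a v = 0}
  add_mem' ha hb := by simp_all
  zero_mem' := by simp
  smul_mem' a b hb := by simp_all

theorem mem_annihilatorOf {ρ : A →+* Module.End R M} {v : M} {a : A} :
    a ∈ annihilatorOf ρ v ↔ ρ a v = 0 :=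
  Iff.rfl

end Annihilator

namespace GHA

variable (f : ℂ[X])

theorem ghaH_mul_ghaX : ghaH f * ghaX f = ghaX f * aeval (ghaH f) f := by
  have := RingQuot.mkAlgHom_rel ℂ (HeisRel.hx (f := f))
  rwa [map_mul, map_mul, ← aeval_algHom_apply] at this

theorem ghaY_mul_ghaH : ghaY f * ghaH f = aeval (ghaH f) f * ghaY f := by
  have := RingQuot.mkAlgHom_rel ℂ (HeisRel.yh (f := f))
  rwa [map_mul, map_mul, ← aeval_algHom_apply] at this

theorem ghaY_mul_ghaX : ghaY f * ghaX f = ghaX f * ghaY f + (aeval (ghaH f) f - ghaH f) := by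
  have := RingQuot.mkAlgHom_rel ℂ (HeisRel.yx (f := f))
  rwa [map_mul, map_add, map_mul, map_sub, ← aeval_algHom_apply] at this

variable {f} {B : Type*} [Ring B] [Algebra ℂ B]

theorem algHom_ext {φ ψ : GHA f →ₐ[ℂ] B} (hx : φ (ghaX f) = ψ (ghaX f))
    (hy : φ (ghaY f) = ψ (ghaY f)) (hh : φ (ghaH f) = ψ (ghaH f)) : φ = ψ := by
  refine RingQuot.ringQuot_ext' ℂ _ _ (FreeAlgebra.hom_ext (funext fun i => ?_))
  fin_cases i
  exacts [hx, hy, hh]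

def lift (a b c : B) (hca : c * a = a * aeval c f) (hbc : b * c = aeval c f * b)
    (hba : b * a = a * b + (aeval c f - c)) : GHA f →ₐ[ℂ] B :=
  RingQuot.liftAlgHom ℂ ⟨FreeAlgebra.lift ℂ ![a, b, c], fun _ _ r => by
    cases r <;> simpa [← aeval_algHom_apply]⟩

section Lift

variable {a b c : B} (hca : c * a = a * aeval c f) (hbc : b * c = aeval c f * b)
  (hba : b * a = a * b + (aeval c f - c))

@[simp] theorem lift_ghaX : lift a b c hca hbc hba (ghaX f) = a := by
  simp [lift, ghaX]

@[simp] theorem lift_ghaY : lift a b c hca hbc hba (ghaY f) = b := by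
  simp [lift, ghaY]

@[simp] theorem lift_ghaH : lift a b c hca hbc hba (ghaH f) = c := by
  simp [lift, ghaH]

end Lift

variable (f)

def transpose : GHA f →ₐ[ℂ] (GHA f)ᵐᵒᵖ :=
  lift (op (ghaY f)) (op (ghaX f)) (op (ghaH f))
    (by rw [aeval_op_apply, ← op_mul, ← op_mul, ghaY_mul_ghaH])
    (by rw [aeval_op_apply, ← op_mul, ← op_mul, ghaH_mul_ghaX])
    (by rw [aeval_op_apply, ← op_mul, ← op_mul, ← op_sub, ← op_add, ghaY_mul_ghaX])

theorem transpose_op_comp_transpose :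
    (AlgHom.op (transpose f)).comp (transpose f) = (AlgEquiv.opOp ℂ (GHA f)).toAlgHom := by
  apply algHom_ext <;> simp [transpose, AlgHom.op]

theorem transpose_surjective : Surjective (transpose f) := fun a => by
  refine ⟨unop (transpose f (unop a)), op_injective ?_⟩
  exact AlgHom.congr_fun (transpose_op_comp_transpose f) (unop a)

section OrbitRep

variable (μ : ℂ)

def orbitX : Module.End ℂ (ℕ →₀ ℂ) := Finsupp.lmapDomain ℂ ℂ Nat.succ

def orbitH : Module.End ℂ (ℕ →₀ ℂ) := Finsupp.lsum ℂ fun i => f.eval^[i] μ • Finsupp.lsingle i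

/-- At `i = 0` the coefficient vanishes, so the junk index `0 - 1 = 0` is harmless. -/
def orbitY : Module.End ℂ (ℕ →₀ ℂ) :=
  Finsupp.lsum ℂ fun i => (f.eval^[i] μ - μ) • Finsupp.lsingle (i - 1)

@[simp] theorem orbitX_single (i : ℕ) (c : ℂ) :
    orbitX (Finsupp.single i c) = Finsupp.single (i + 1) c := by
  simp [orbitX]

@[simp] theorem orbitH_single (i : ℕ) (c : ℂ) :
    orbitH f μ (Finsupp.single i c) = f.eval^[i] μ • Finsupp.single i c := by
  simp [orbitH]

@[simp] theorem orbitY_single (i : ℕ) (c : ℂ) :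
    orbitY f μ (Finsupp.single i c) = (f.eval^[i] μ - μ) • Finsupp.single (i - 1) c := by
  simp [orbitY]

@[simp] theorem aeval_orbitH_single (p : ℂ[X]) (i : ℕ) (c : ℂ) :
    aeval (orbitH f μ) p (Finsupp.single i c) = p.eval (f.eval^[i] μ) • Finsupp.single i c :=
  Module.End.aeval_apply_of_mem_apply_eq_smul (orbitH_single f μ i c)

theorem orbitH_mul_orbitX : orbitH f μ * orbitX = orbitX * aeval (orbitH f μ) f :=
  Finsupp.lhom_ext fun i c => by
    simp only [Module.End.mul_apply, orbitX_single, orbitH_single, aeval_orbitH_single, map_smul,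
      iterate_succ_apply']

theorem orbitY_mul_orbitH : orbitY f μ * orbitH f μ = aeval (orbitH f μ) f * orbitY f μ :=
  Finsupp.lhom_ext fun i c => by
    simp only [Module.End.mul_apply, orbitH_single, orbitY_single, aeval_orbitH_single, map_smul,
      smul_smul]
    cases i with
    | zero => simp only [iterate_zero_apply, sub_self, mul_zero, zero_mul]
    | succ j => rw [Nat.add_sub_cancel, iterate_succ_apply', mul_comm]

theorem orbitY_mul_orbitX :
    orbitY f μ * orbitX = orbitX * orbitY f μ + (aeval (orbitH f μ) f - orbitH f μ) :=
  Finsupp.lhom_ext fun i c => by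
    simp only [LinearMap.add_apply, LinearMap.sub_apply, Module.End.mul_apply, orbitX_single,
      orbitY_single, aeval_orbitH_single, orbitH_single, map_smul, iterate_succ_apply' _ i]
    cases i with
    | zero => simp only [iterate_zero_apply, sub_self, zero_smul, zero_add, sub_smul]
    | succ j =>
      rw [Nat.add_sub_cancel_right j 1, ← sub_smul, ← add_smul, sub_add_sub_cancel',
        Nat.add_sub_cancel]

def orbitRep : GHA f →ₐ[ℂ] Module.End ℂ (ℕ →₀ ℂ) :=
  lift orbitX (orbitY f μ) (orbitH f μ) (orbitH_mul_orbitX f μ) (orbitY_mul_orbitH f μ)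
    (orbitY_mul_orbitX f μ)

theorem orbitY_pow_single (k n : ℕ) (c : ℂ) :
    (orbitY f μ ^ k) (Finsupp.single n c) =
      (∏ l ∈ Finset.range k, (f.eval^[n - l] μ - μ)) • Finsupp.single (n - k) c := by
  induction k with
  | zero => simp
  | succ k ih =>
    rw [pow_succ', Module.End.mul_apply, ih, map_smul, orbitY_single, smul_smul,
      Finset.prod_range_succ, Nat.sub_sub]

@[simp] theorem orbitRep_ghaY : orbitRep f μ (ghaY f) = orbitY f μ := lift_ghaY ..

@[simp] theorem orbitRep_ghaH : orbitRep f μ (ghaH f) = orbitH f μ := lift_ghaH ..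

def lowering (b : ℂ) (k : ℕ) : GHA f := (ghaH f - algebraMap ℂ (GHA f) b) * ghaY f ^ k

theorem orbitRep_lowering_single (b : ℂ) (k n : ℕ) (c : ℂ) :
    orbitRep f μ (lowering f b k) (Finsupp.single n c) =
      ((∏ l ∈ Finset.range k, (f.eval^[n - l] μ - μ)) * (f.eval^[n - k] μ - b)) •
        Finsupp.single (n - k) c := by
  rw [lowering, map_mul, map_pow, map_sub, AlgHom.commutes, orbitRep_ghaY, orbitRep_ghaH,
    Module.End.mul_apply, orbitY_pow_single, map_smul, LinearMap.sub_apply, orbitH_single,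
    Module.algebraMap_end_apply, ← sub_smul, smul_smul]

end OrbitRep

theorem not_isNoetherianRing (hf : 1 < f.natDegree) : ¬ IsNoetherianRing (GHA f) := by
  have : Uncountable ℂ := Complex.ofReal_injective.uncountable
  obtain ⟨β, hβ, hβ_avoid⟩ := exists_backward_orbit f hf
  refine not_isNoetherianRing_of_notMem_span (fun k => lowering f (β k) k) fun n hmem => ?_
  obtain ⟨μ, hμ, hμβ⟩ :=
    exists_eval_eq_forall_ne f hf hβ (hβ_avoid n).1 fun l => (hβ_avoid l).2
  have hweight (k : ℕ) (hk : k ≤ n) : f.eval^[n + 1 - k] μ = β k :=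
    iterate_succ_sub_apply_of_backward_orbit hβ hμ hk
  have hspan : Ideal.span ((fun k => lowering f (β k) k) '' Set.Iic n) ≤
      annihilatorOf (orbitRep f μ).toRingHom (Finsupp.single (n + 1) 1) := by
    rw [Ideal.span_le]
    rintro _ ⟨k, hk, rfl⟩
    simp [mem_annihilatorOf, orbitRep_lowering_single, hweight k hk]
  have hzero := hspan hmem
  rw [mem_annihilatorOf, AlgHom.toRingHom_eq_coe, RingHom.coe_coe, orbitRep_lowering_single,
    Nat.sub_self, iterate_zero_apply] at hzero
  refine smul_ne_zero (mul_ne_zero (Finset.prod_ne_zero_iff.2 fun l hl => ?_)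
    (sub_ne_zero.2 (hμβ _ le_rfl))) (Finsupp.single_ne_zero.2 one_ne_zero) hzero
  rw [hweight l (by simpa using Finset.mem_range.1 hl)]
  exact sub_ne_zero.2 (hμβ l (by simpa using (Finset.mem_range.1 hl).le)).symm

theorem not_isNoetherianRing_op (hf : 1 < f.natDegree) :
    ¬ IsNoetherianRing (GHA f)ᵐᵒᵖ := fun _ =>
  not_isNoetherianRing f hf
    (isNoetherianRing_of_surjective_op (transpose f).toRingHom (transpose_surjective f))

end GHA

/-- If deg f > 1 then H(f) is neither left nor right Noetherian. -/
theorem gha_not_noetherian (f : ℂ[X]) (hf : 1 < f.natDegree) :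
    ¬ IsNoetherianRing (GHA f) ∧ ¬ IsNoetherianRing (GHA f)ᵐᵒᵖ :=
  ⟨GHA.not_isNoetherianRing f hf, GHA.not_isNoetherianRing_op f hf⟩
end
end

section
/- If deg f ≤ 1, say f(h) = ah + b, then H(f) is isomorphic to the generalized down-up algebra L(H − f(H), a, 1, −b) via an isomorphism sending x, y, h to u, d, H respectively. -/
open Polynomial MulOpposite

noncomputable section

/-- Defining relations of the generalized down-up algebra L(g, r, s, γ):
generators d (index 0), u (index 1), H (index 2) with
dH = r·Hd - γ·d, Hu = r·uH - γ·u, du = s·ud - g(H). -/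
inductive GDURel (g : ℂ[X]) (r s γ : ℂ) :
    FreeAlgebra ℂ (Fin 3) → FreeAlgebra ℂ (Fin 3) → Prop
  | dH : GDURel g r s γ (FreeAlgebra.ι ℂ 0 * FreeAlgebra.ι ℂ 2)
      (r • (FreeAlgebra.ι ℂ 2 * FreeAlgebra.ι ℂ 0) - γ • FreeAlgebra.ι ℂ 0)
  | Hu : GDURel g r s γ (FreeAlgebra.ι ℂ 2 * FreeAlgebra.ι ℂ 1)
      (r • (FreeAlgebra.ι ℂ 1 * FreeAlgebra.ι ℂ 2) - γ • FreeAlgebra.ι ℂ 1)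
  | du : GDURel g r s γ (FreeAlgebra.ι ℂ 0 * FreeAlgebra.ι ℂ 1)
      (s • (FreeAlgebra.ι ℂ 1 * FreeAlgebra.ι ℂ 0) - aeval (FreeAlgebra.ι ℂ 2) g)

/-- The generalized down-up algebra L(g, r, s, γ). -/
abbrev GDU (g : ℂ[X]) (r s γ : ℂ) := RingQuot (GDURel g r s γ)

def gduD (g : ℂ[X]) (r s γ : ℂ) : GDU g r s γ :=
  RingQuot.mkAlgHom ℂ (GDURel g r s γ) (FreeAlgebra.ι ℂ 0)
def gduU (g : ℂ[X]) (r s γ : ℂ) : GDU g r s γ :=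
  RingQuot.mkAlgHom ℂ (GDURel g r s γ) (FreeAlgebra.ι ℂ 1)
def gduH (g : ℂ[X]) (r s γ : ℂ) : GDU g r s γ :=
  RingQuot.mkAlgHom ℂ (GDURel g r s γ) (FreeAlgebra.ι ℂ 2)

/-- If f(h) = ah + b then H(f) ≅ L(H - f(H), a, 1, -b) via x ↦ u, y ↦ d, h ↦ H. -/
theorem gha_iso_gdu (f : ℂ[X]) (a b : ℂ) (hf : f = C a * X + C b) :
    ∃ e : GHA f ≃ₐ[ℂ] GDU (X - f) a 1 (-b),
      e (ghaX f) = gduU (X - f) a 1 (-b) ∧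
      e (ghaY f) = gduD (X - f) a 1 (-b) ∧
      e (ghaH f) = gduH (X - f) a 1 (-b) := by
  set U := gduU (X - f) a 1 (-b) with hU
  set D := gduD (X - f) a 1 (-b) with hD
  set Hg := gduH (X - f) a 1 (-b) with hHg
  have rHu : Hg * U = a • (U * Hg) + b • U := by
    have := RingQuot.mkAlgHom_rel ℂ (GDURel.Hu (g := X - f) (r := a) (s := 1) (γ := -b))
    simpa [map_mul, map_sub, map_smul, hU, hD, hHg, gduU, gduD, gduH, sub_neg_eq_add] using this
  have rdH : D * Hg = a • (Hg * D) + b • D := by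
    have := RingQuot.mkAlgHom_rel ℂ (GDURel.dH (g := X - f) (r := a) (s := 1) (γ := -b))
    simpa [map_mul, map_sub, map_smul, hU, hD, hHg, gduU, gduD, gduH, sub_neg_eq_add] using this
  have rdu : D * U = U * D - (Hg - aeval Hg f) := by
    have := RingQuot.mkAlgHom_rel ℂ (GDURel.du (g := X - f) (r := a) (s := 1) (γ := -b))
    simpa [map_mul, map_sub, map_smul, hU, hD, hHg, gduU, gduD, gduH,
      ← Polynomial.aeval_algHom_apply, map_sub, aeval_X] using this
  set Xg := ghaX f with hXg
  set Yg := ghaY f with hYg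
  set Hh := ghaH f with hHh
  have rhx : Hh * Xg = Xg * aeval Hh f := by
    have := RingQuot.mkAlgHom_rel ℂ (HeisRel.hx (f := f))
    simpa [map_mul, hXg, hYg, hHh, ghaX, ghaY, ghaH, ← Polynomial.aeval_algHom_apply] using this
  have ryh : Yg * Hh = aeval Hh f * Yg := by
    have := RingQuot.mkAlgHom_rel ℂ (HeisRel.yh (f := f))
    simpa [map_mul, hXg, hYg, hHh, ghaX, ghaY, ghaH, ← Polynomial.aeval_algHom_apply] using this
  have ryx : Yg * Xg = Xg * Yg + (aeval Hh f - Hh) := by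
    have := RingQuot.mkAlgHom_rel ℂ (HeisRel.yx (f := f))
    simpa [map_mul, map_add, map_sub, hXg, hYg, hHh, ghaX, ghaY, ghaH,
      ← Polynomial.aeval_algHom_apply] using this
  have aev : ∀ {A : Type} [inst : Ring A] [inst2 : Algebra ℂ A] (t : A),
      aeval t f = a • t + b • (1 : A) := by
    intro A _ _ t
    simp [hf, Algebra.smul_def, mul_one]
  -- forward free-algebra hom: x ↦ u, y ↦ d, h ↦ H
  set F : FreeAlgebra ℂ (Fin 3) →ₐ[ℂ] GDU (X - f) a 1 (-b) :=
    FreeAlgebra.lift ℂ ![U, D, Hg] with hFdef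
  have hF0 : F (FreeAlgebra.ι ℂ 0) = U := by simp [hFdef]
  have hF1 : F (FreeAlgebra.ι ℂ 1) = D := by simp [hFdef]
  have hF2 : F (FreeAlgebra.ι ℂ 2) = Hg := by simp [hFdef]
  have wF : ∀ ⦃p q : FreeAlgebra ℂ (Fin 3)⦄, HeisRel f p q → F p = F q := by
    intro p q hpq
    cases hpq with
    | hx =>
        rw [map_mul, map_mul, hF0, hF2, ← Polynomial.aeval_algHom_apply, hF2, rHu, aev]
        rw [mul_add, mul_smul_comm, mul_smul_comm, mul_one]
    | yh =>
        rw [map_mul, map_mul, hF1, hF2, ← Polynomial.aeval_algHom_apply, hF2, rdH, aev]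
        rw [add_mul, smul_mul_assoc, smul_mul_assoc, one_mul]
    | yx =>
        rw [map_mul, map_add, map_mul, map_sub, hF0, hF1, ← Polynomial.aeval_algHom_apply,
          hF2, rdu]
        abel
  -- backward free-algebra hom: d ↦ y, u ↦ x, H ↦ h
  set G : FreeAlgebra ℂ (Fin 3) →ₐ[ℂ] GHA f :=
    FreeAlgebra.lift ℂ ![Yg, Xg, Hh] with hGdef
  have hG0 : G (FreeAlgebra.ι ℂ 0) = Yg := by simp [hGdef]
  have hG1 : G (FreeAlgebra.ι ℂ 1) = Xg := by simp [hGdef]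
  have hG2 : G (FreeAlgebra.ι ℂ 2) = Hh := by simp [hGdef]
  have wG : ∀ ⦃p q : FreeAlgebra ℂ (Fin 3)⦄, GDURel (X - f) a 1 (-b) p q → G p = G q := by
    intro p q hpq
    cases hpq with
    | dH =>
        rw [map_mul, map_sub, map_smul, map_smul, map_mul, hG0, hG2, ryh, aev]
        rw [add_mul, smul_mul_assoc, smul_mul_assoc, one_mul]
        module
    | Hu =>
        rw [map_mul, map_sub, map_smul, map_smul, map_mul, hG1, hG2, rhx, aev]
        rw [mul_add, mul_smul_comm, mul_smul_comm, mul_one]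
        module
    | du =>
        rw [map_mul, map_sub, map_smul, map_mul, ← Polynomial.aeval_algHom_apply, hG0, hG1,
          hG2, ryx, one_smul, map_sub, aeval_X]
        abel
  set φ : GHA f →ₐ[ℂ] GDU (X - f) a 1 (-b) := RingQuot.liftAlgHom ℂ ⟨F, wF⟩ with hφdef
  set ψ : GDU (X - f) a 1 (-b) →ₐ[ℂ] GHA f := RingQuot.liftAlgHom ℂ ⟨G, wG⟩ with hψdef
  have hφX : φ Xg = U := by
    rw [hXg, ghaX, hφdef, RingQuot.liftAlgHom_mkAlgHom_apply]; exact hF0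
  have hφY : φ Yg = D := by
    rw [hYg, ghaY, hφdef, RingQuot.liftAlgHom_mkAlgHom_apply]; exact hF1
  have hφH : φ Hh = Hg := by
    rw [hHh, ghaH, hφdef, RingQuot.liftAlgHom_mkAlgHom_apply]; exact hF2
  have hψD : ψ D = Yg := by
    rw [hD, gduD, hψdef, RingQuot.liftAlgHom_mkAlgHom_apply]; exact hG0
  have hψU : ψ U = Xg := by
    rw [hU, gduU, hψdef, RingQuot.liftAlgHom_mkAlgHom_apply]; exact hG1
  have hψH : ψ Hg = Hh := by
    rw [hHg, gduH, hψdef, RingQuot.liftAlgHom_mkAlgHom_apply]; exact hG2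
  have c1 : φ.comp ψ = AlgHom.id ℂ (GDU (X - f) a 1 (-b)) := by
    apply RingQuot.ringQuot_ext'
    apply FreeAlgebra.hom_ext
    funext i
    fin_cases i
    · show φ (ψ (RingQuot.mkAlgHom ℂ _ (FreeAlgebra.ι ℂ 0)))
        = RingQuot.mkAlgHom ℂ _ (FreeAlgebra.ι ℂ 0)
      rw [show RingQuot.mkAlgHom ℂ (GDURel (X - f) a 1 (-b)) (FreeAlgebra.ι ℂ 0) = D from rfl,
        hψD, hφY]
    · show φ (ψ (RingQuot.mkAlgHom ℂ _ (FreeAlgebra.ι ℂ 1)))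
        = RingQuot.mkAlgHom ℂ _ (FreeAlgebra.ι ℂ 1)
      rw [show RingQuot.mkAlgHom ℂ (GDURel (X - f) a 1 (-b)) (FreeAlgebra.ι ℂ 1) = U from rfl,
        hψU, hφX]
    · show φ (ψ (RingQuot.mkAlgHom ℂ _ (FreeAlgebra.ι ℂ 2)))
        = RingQuot.mkAlgHom ℂ _ (FreeAlgebra.ι ℂ 2)
      rw [show RingQuot.mkAlgHom ℂ (GDURel (X - f) a 1 (-b)) (FreeAlgebra.ι ℂ 2) = Hg from rfl,
        hψH, hφH]
  have c2 : ψ.comp φ = AlgHom.id ℂ (GHA f) := by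
    apply RingQuot.ringQuot_ext'
    apply FreeAlgebra.hom_ext
    funext i
    fin_cases i
    · show ψ (φ (RingQuot.mkAlgHom ℂ _ (FreeAlgebra.ι ℂ 0)))
        = RingQuot.mkAlgHom ℂ _ (FreeAlgebra.ι ℂ 0)
      rw [show RingQuot.mkAlgHom ℂ (HeisRel f) (FreeAlgebra.ι ℂ 0) = Xg from rfl, hφX, hψU]
    · show ψ (φ (RingQuot.mkAlgHom ℂ _ (FreeAlgebra.ι ℂ 1)))
        = RingQuot.mkAlgHom ℂ _ (FreeAlgebra.ι ℂ 1)
      rw [show RingQuot.mkAlgHom ℂ (HeisRel f) (FreeAlgebra.ι ℂ 1) = Yg from rfl, hφY, hψD]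
    · show ψ (φ (RingQuot.mkAlgHom ℂ _ (FreeAlgebra.ι ℂ 2)))
        = RingQuot.mkAlgHom ℂ _ (FreeAlgebra.ι ℂ 2)
      rw [show RingQuot.mkAlgHom ℂ (HeisRel f) (FreeAlgebra.ι ℂ 2) = Hh from rfl, hφH, hψH]
  refine ⟨AlgEquiv.ofAlgHom φ ψ c1 c2, ?_, ?_, ?_⟩
  · exact hφX
  · exact hφY
  · exact hφH
end
end

section
/- Assume deg f > 1. Then the element x h y of H(f)_0 does not belong to the subalgebra ℂ[z, h] generated by h and the central element z = xy − h; in particular ℂ[z, h] is a proper subalgebra of H(f)_0. -/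
open Polynomial MulOpposite

noncomputable section

/-
`ℂ[z, h] ⊆ H(f)_0` because `H(f)_0` is stable under right multiplication by `h` and by `xy`:
moving `y ^ k` past `h` and `x` only produces polynomials in `h` times `y ^ k` or `y ^ (k + 1)`.

For `x h y ∉ ℂ[z, h]`, let `H(f)` act on `⊕ₙ ℂ[t] eₙ` so that `z` acts as `-t` and `h` as `σⁿ(t)`
on `eₙ`. Then `Q(z, h)` acts on `eₙ₊₁` as `Q(-t, σⁿ⁺¹(t))` and `x h y` as `σⁿ(t) (σⁿ⁺¹(t) - t)`.
As `deg σⁿ = dⁿ` with `d = deg f ≥ 2`, for large `n` the first polynomial has degree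
`c + m dⁿ⁺¹` and the second `dⁿ + dⁿ⁺¹`, and no constants `c, m` fit two consecutive `n`.
-/

namespace Polynomial

variable {R : Type*} [CommSemiring R]

theorem natDegree_eval_le_of_natDegree_coeff_le (Q : R[X][X]) (s : R[X]) {b : ℕ}
    (hb : ∀ i, (Q.coeff i).natDegree ≤ b) :
    (Q.eval s).natDegree ≤ b + Q.natDegree * s.natDegree := by
  rw [eval_eq_sum_range]
  refine natDegree_sum_le_of_forall_le _ _ fun i hi => natDegree_mul_le.trans ?_
  have hi : i ≤ Q.natDegree := Nat.lt_succ_iff.mp (Finset.mem_range.mp hi)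
  exact add_le_add (hb i) (natDegree_pow_le.trans (Nat.mul_le_mul_right _ hi))

theorem natDegree_eval_of_natDegree_coeff_lt [NoZeroDivisors R] (Q : R[X][X]) (s : R[X])
    (hs : ∀ i, (Q.coeff i).natDegree < s.natDegree) :
    (Q.eval s).natDegree = Q.leadingCoeff.natDegree + Q.natDegree * s.natDegree := by
  obtain hQ | hQ := Nat.eq_zero_or_pos Q.natDegree
  · rw [eq_C_of_natDegree_eq_zero hQ]
    simp
  have hs0 : s ≠ 0 := by rintro rfl; simpa using hs 0
  have hlc : Q.leadingCoeff ≠ 0 := leadingCoeff_ne_zero.mpr (by rintro rfl; simp at hQ)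
  have hlead : (Q.leadingCoeff * s ^ Q.natDegree).natDegree =
      Q.leadingCoeff.natDegree + Q.natDegree * s.natDegree := by
    rw [natDegree_mul hlc (pow_ne_zero _ hs0), natDegree_pow]
  have hlow : (Q.eraseLead.eval s).natDegree < (Q.leadingCoeff * s ^ Q.natDegree).natDegree := by
    have hb : ∀ i, (Q.eraseLead.coeff i).natDegree ≤ s.natDegree - 1 := fun i => by
      rw [eraseLead_coeff]
      split_ifs
      · simp
      · exact Nat.le_sub_one_of_lt (hs i)
    have h₁ := natDegree_eval_le_of_natDegree_coeff_le _ s hb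
    have h₂ := Nat.mul_le_mul_right s.natDegree (eraseLead_natDegree_le Q)
    obtain ⟨m, hm⟩ := Nat.exists_eq_add_one_of_ne_zero hQ.ne'
    rw [hm, Nat.add_sub_cancel] at h₂
    rw [hlead, hm, Nat.succ_mul]
    have := hs 0
    omega
  conv_lhs => rw [← eraseLead_add_C_mul_X_pow Q]
  rw [eval_add, eval_C_mul, eval_pow, eval_X, natDegree_add_eq_right_of_natDegree_lt hlow, hlead]

end Polynomial

theorem SemiconjBy.aeval {R A : Type*} [CommSemiring R] [Semiring A] [Algebra R A] {a b c : A}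
    (h : SemiconjBy a b c) (q : R[X]) : SemiconjBy a (aeval b q) (aeval c q) := by
  induction q using Polynomial.induction_on' with
  | add p q hp hq => simpa only [map_add] using hp.add_right hq
  | monomial n r =>
    simpa only [aeval_monomial] using
      (Algebra.commute_algebraMap_right r a).semiconjBy.mul_right (h.pow_right n)

theorem Submodule.mul_mem_span_of_forall_mul_mem {R A : Type*} [CommSemiring R] [Semiring A]
    [Algebra R A] {S : Set A} {a : A} (h : ∀ s ∈ S, s * a ∈ span R S) {v : A}
    (hv : v ∈ span R S) : v * a ∈ span R S :=
  (span_le (p := (span R S).comap (LinearMap.mulRight R a))).mpr h hv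

namespace GeneralizedHeisenberg

variable (f : ℂ[X])

@[simp] lemma sigmaIter_zero : sigmaIter f 0 = X := rfl

@[simp] lemma sigmaIter_one : sigmaIter f 1 = f := X_comp

lemma comp_sigmaIter (k : ℕ) : f.comp (sigmaIter f k) = sigmaIter f (k + 1) := by
  induction k with
  | zero => simp [sigmaIter]
  | succ k ih => rw [sigmaIter, ← comp_assoc, ih]; rfl

lemma natDegree_sigmaIter (k : ℕ) : (sigmaIter f k).natDegree = f.natDegree ^ k := by
  induction k with
  | zero => simp
  | succ k ih => rw [sigmaIter, natDegree_comp, ih, pow_succ]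

lemma semiconjBy_ghaY_ghaH : SemiconjBy (ghaY f) (ghaH f) (aeval (ghaH f) f) := by
  rw [SemiconjBy, ghaY, ghaH, aeval_algHom_apply, ← map_mul, ← map_mul]
  exact RingQuot.mkAlgHom_rel ℂ HeisRel.yh

lemma semiconjBy_ghaX_ghaH : SemiconjBy (ghaX f) (aeval (ghaH f) f) (ghaH f) := by
  rw [SemiconjBy, ghaX, ghaH, aeval_algHom_apply, ← map_mul, ← map_mul]
  exact (RingQuot.mkAlgHom_rel ℂ HeisRel.hx).symm

lemma ghaY_mul_ghaX : ghaY f * ghaX f = ghaX f * ghaY f + (aeval (ghaH f) f - ghaH f) := by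
  rw [ghaY, ghaX, ← map_mul, RingQuot.mkAlgHom_rel ℂ HeisRel.yx, map_add, map_mul, map_sub,
    ← aeval_algHom_apply]
  rfl

lemma aeval_ghaH_mul_ghaX (q : ℂ[X]) :
    aeval (ghaH f) q * ghaX f = ghaX f * aeval (ghaH f) (q.comp f) := by
  rw [aeval_comp]
  exact ((semiconjBy_ghaX_ghaH f).aeval q).symm

lemma ghaY_pow_mul_aeval_ghaH (k : ℕ) (q : ℂ[X]) :
    ghaY f ^ k * aeval (ghaH f) q = aeval (ghaH f) (q.comp (sigmaIter f k)) * ghaY f ^ k := by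
  induction k with
  | zero => simp
  | succ k ih =>
    rw [pow_succ', mul_assoc, ih, ← mul_assoc, ((semiconjBy_ghaY_ghaH f).aeval _).eq,
      ← aeval_comp, comp_assoc, sigmaIter, mul_assoc]

lemma ghaY_pow_mul_ghaX_mul_ghaY (k : ℕ) :
    ghaY f ^ k * ghaX f * ghaY f
      = ghaX f * ghaY f ^ (k + 1) + aeval (ghaH f) (sigmaIter f k - X) * ghaY f ^ k := by
  induction k with
  | zero => simp
  | succ k ih =>
    have hstep : ghaY f ^ k * aeval (ghaH f) (f - X) * ghaY f
        = aeval (ghaH f) (sigmaIter f (k + 1) - sigmaIter f k) * ghaY f ^ (k + 1) := by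
      rw [ghaY_pow_mul_aeval_ghaH, sub_comp, comp_sigmaIter, X_comp, mul_assoc, ← pow_succ]
    calc ghaY f ^ (k + 1) * ghaX f * ghaY f
        = (ghaY f ^ k * ghaX f * ghaY f) * ghaY f
          + ghaY f ^ k * aeval (ghaH f) (f - X) * ghaY f := by
          rw [pow_succ, mul_assoc (ghaY f ^ k), ghaY_mul_ghaX, map_sub, aeval_X]
          noncomm_ring
      _ = _ := by
          rw [ih, hstep, add_mul, mul_assoc, ← pow_succ, mul_assoc, ← pow_succ, add_assoc,
            ← add_mul, ← map_add]
          ring_nf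

/-- `H(f)_0`. -/
def degreeZeroPart : Submodule ℂ (GHA f) :=
  Submodule.span ℂ {a : GHA f | ∃ k m : ℕ, a = (ghaX f) ^ k * (ghaH f) ^ m * (ghaY f) ^ k}

lemma ghaX_pow_mul_aeval_mul_ghaY_pow_mem (k : ℕ) (q : ℂ[X]) :
    ghaX f ^ k * aeval (ghaH f) q * ghaY f ^ k ∈ degreeZeroPart f := by
  rw [aeval_eq_sum_range, Finset.mul_sum, Finset.sum_mul]
  refine Submodule.sum_mem _ fun i _ => ?_
  rw [mul_smul_comm, smul_mul_assoc]
  exact Submodule.smul_mem _ _ (Submodule.subset_span ⟨k, i, rfl⟩)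

lemma mul_ghaH_mem {v : GHA f} (hv : v ∈ degreeZeroPart f) : v * ghaH f ∈ degreeZeroPart f := by
  refine Submodule.mul_mem_span_of_forall_mul_mem ?_ hv
  rintro _ ⟨k, m, rfl⟩
  have h := ghaY_pow_mul_aeval_ghaH f k X
  rw [aeval_X, X_comp] at h
  rw [mul_assoc, h, ← mul_assoc, mul_assoc (ghaX f ^ k), ← aeval_X_pow (x := ghaH f) (R := ℂ),
    ← map_mul]
  exact ghaX_pow_mul_aeval_mul_ghaY_pow_mem f k _

lemma mul_ghaX_mul_ghaY_mem {v : GHA f} (hv : v ∈ degreeZeroPart f) :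
    v * (ghaX f * ghaY f) ∈ degreeZeroPart f := by
  refine Submodule.mul_mem_span_of_forall_mul_mem ?_ hv
  rintro _ ⟨k, m, rfl⟩
  have h : ghaX f ^ k * ghaH f ^ m * ghaY f ^ k * (ghaX f * ghaY f)
      = ghaX f ^ (k + 1) * aeval (ghaH f) ((X ^ m).comp f) * ghaY f ^ (k + 1)
        + ghaX f ^ k * aeval (ghaH f) (X ^ m * (sigmaIter f k - X)) * ghaY f ^ k := by
    calc _ = ghaX f ^ k * aeval (ghaH f) (X ^ m) * (ghaY f ^ k * ghaX f * ghaY f) := by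
          rw [aeval_X_pow (R := ℂ)]; noncomm_ring
      _ = _ := by
          rw [ghaY_pow_mul_ghaX_mul_ghaY, mul_add, ← mul_assoc, mul_assoc _ (aeval _ _),
            aeval_ghaH_mul_ghaX, map_mul]
          noncomm_ring
  rw [h]
  exact add_mem (ghaX_pow_mul_aeval_mul_ghaY_pow_mem f _ _)
    (ghaX_pow_mul_aeval_mul_ghaY_pow_mem f _ _)

lemma mem_degreeZeroPart_of_mem_adjoin {a : GHA f}
    (ha : a ∈ Algebra.adjoin ℂ {ghaX f * ghaY f - ghaH f, ghaH f}) : a ∈ degreeZeroPart f := by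
  suffices h : ∀ v ∈ degreeZeroPart f, v * a ∈ degreeZeroPart f by
    simpa using h 1 (Submodule.subset_span ⟨0, 0, by simp⟩)
  induction ha using Algebra.adjoin_induction with
  | mem a ha =>
    rcases ha with rfl | rfl
    · intro v hv
      rw [mul_sub]
      exact sub_mem (mul_ghaX_mul_ghaY_mem f hv) (mul_ghaH_mem f hv)
    · exact fun v hv => mul_ghaH_mem f hv
  | algebraMap r =>
    intro v hv
    rw [← Algebra.commutes, ← Algebra.smul_def]
    exact Submodule.smul_mem _ r hv
  | add a b _ _ ha hb => exact fun v hv => mul_add v a b ▸ add_mem (ha v hv) (hb v hv)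
  | mul a b _ _ ha hb => exact fun v hv => mul_assoc v a b ▸ hb _ (ha v hv)

/- The representation on `⊕ₙ ℂ[t] eₙ`: `x eₙ = eₙ₊₁`, `h eₙ = σⁿ(t) eₙ`,
`y eₙ₊₁ = (σⁿ⁺¹(t) - t) eₙ`, `y e₀ = 0`, chosen so that `z = xy - h` acts as the scalar `-t`. -/

def opX : Module.End ℂ (ℕ →₀ ℂ[X]) := Finsupp.lsum ℂ fun n => Finsupp.lsingle (n + 1)

def opH : Module.End ℂ (ℕ →₀ ℂ[X]) :=
  Finsupp.lsum ℂ fun n => (Finsupp.lsingle n).comp (LinearMap.mulLeft ℂ (sigmaIter f n))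

def opY : Module.End ℂ (ℕ →₀ ℂ[X]) :=
  Finsupp.lsum ℂ fun
    | 0 => 0
    | n + 1 => (Finsupp.lsingle n).comp (LinearMap.mulLeft ℂ (sigmaIter f (n + 1) - X))

@[simp] lemma opX_single (n : ℕ) (g : ℂ[X]) :
    opX (Finsupp.single n g) = Finsupp.single (n + 1) g := by
  simp [opX]

@[simp] lemma opH_single (n : ℕ) (g : ℂ[X]) :
    opH f (Finsupp.single n g) = Finsupp.single n (sigmaIter f n * g) := by
  simp [opH]

@[simp] lemma opY_single_zero (g : ℂ[X]) : opY f (Finsupp.single 0 g) = 0 := by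
  simp [opY]

@[simp] lemma opY_single_succ (n : ℕ) (g : ℂ[X]) :
    opY f (Finsupp.single (n + 1) g) = Finsupp.single n ((sigmaIter f (n + 1) - X) * g) := by
  simp [opY]

lemma aeval_opH_single (q : ℂ[X]) (n : ℕ) (g : ℂ[X]) :
    aeval (opH f) q (Finsupp.single n g) = Finsupp.single n (q.comp (sigmaIter f n) * g) := by
  induction q using Polynomial.induction_on' with
  | add p q hp hq =>
    rw [map_add, LinearMap.add_apply, hp, hq, add_comp, add_mul, Finsupp.single_add]
  | monomial m c =>
    have hpow : ∀ k, (opH f ^ k) (Finsupp.single n g)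
        = Finsupp.single n (sigmaIter f n ^ k * g) := fun k => by
      induction k with
      | zero => simp
      | succ k ih => rw [pow_succ', Module.End.mul_apply, ih, opH_single, ← mul_assoc, ← pow_succ']
    rw [aeval_monomial, Module.End.mul_apply, hpow, ← C_mul_X_pow_eq_monomial, mul_comp, C_comp,
      X_pow_comp, Module.algebraMap_end_apply, Finsupp.smul_single, smul_eq_C_mul, mul_assoc]

lemma opH_mul_opX : opH f * opX = opX * aeval (opH f) f := by
  refine Finsupp.lhom_ext fun n g => ?_
  simp only [Module.End.mul_apply, opX_single, opH_single, aeval_opH_single, comp_sigmaIter]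

lemma opY_mul_opH : opY f * opH f = aeval (opH f) f * opY f := by
  refine Finsupp.lhom_ext fun n g => ?_
  cases n with
  | zero => simp only [Module.End.mul_apply, opH_single, opY_single_zero, map_zero]
  | succ n =>
    simp only [Module.End.mul_apply, opH_single, opY_single_succ, aeval_opH_single,
      comp_sigmaIter]
    ring_nf

lemma opY_mul_opX : opY f * opX = opX * opY f + (aeval (opH f) f - opH f) := by
  refine Finsupp.lhom_ext fun n g => ?_
  cases n with
  | zero =>
    simp only [LinearMap.add_apply, LinearMap.sub_apply, Module.End.mul_apply, opX_single,
      opY_single_succ, opY_single_zero, map_zero, zero_add, opH_single, aeval_opH_single,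
      sigmaIter_zero, sigmaIter_one, comp_X, ← Finsupp.single_sub, ← sub_mul]
  | succ n =>
    simp only [LinearMap.add_apply, LinearMap.sub_apply, Module.End.mul_apply, opX_single,
      opY_single_succ, opH_single, aeval_opH_single, comp_sigmaIter, ← Finsupp.single_sub,
      ← Finsupp.single_add]
    ring_nf

def ghaRep : GHA f →ₐ[ℂ] Module.End ℂ (ℕ →₀ ℂ[X]) :=
  RingQuot.liftAlgHom ℂ
    ⟨FreeAlgebra.lift ℂ ![opX, opY f, opH f], by
      rintro _ _ ⟨⟩ <;>
        simp only [map_mul, map_add, map_sub, FreeAlgebra.lift_ι_apply, ← aeval_algHom_apply]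
      exacts [opH_mul_opX f, opY_mul_opH f, opY_mul_opX f]⟩

@[simp] lemma ghaRep_ghaX : ghaRep f (ghaX f) = opX := by
  simp [ghaRep, ghaX]

@[simp] lemma ghaRep_ghaY : ghaRep f (ghaY f) = opY f := by
  simp [ghaRep, ghaY]

@[simp] lemma ghaRep_ghaH : ghaRep f (ghaH f) = opH f := by
  simp [ghaRep, ghaH]

lemma exists_ghaRep_single_of_mem_adjoin {p : GHA f}
    (hp : p ∈ Algebra.adjoin ℂ {ghaX f * ghaY f - ghaH f, ghaH f}) :
    ∃ Q : ℂ[X][X], ∀ n g,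
      ghaRep f p (Finsupp.single n g) = Finsupp.single n (Q.eval (sigmaIter f n) * g) := by
  induction hp using Algebra.adjoin_induction with
  | mem a ha =>
    rcases ha with rfl | rfl
    · refine ⟨C (-X), fun n g => ?_⟩
      cases n <;>
        simp only [map_sub, map_mul, ghaRep_ghaX, ghaRep_ghaY, ghaRep_ghaH, LinearMap.sub_apply,
          Module.End.mul_apply, opY_single_zero, opY_single_succ, opX_single, opH_single,
          map_zero, zero_sub, eval_C, sigmaIter_zero, ← Finsupp.single_neg,
          ← Finsupp.single_sub] <;>
        ring_nf
    · exact ⟨X, fun n g => by simp only [ghaRep_ghaH, opH_single, eval_X]⟩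
  | algebraMap r =>
    refine ⟨C (C r), fun n g => ?_⟩
    rw [AlgHom.commutes, Module.algebraMap_end_apply, Finsupp.smul_single, eval_C, smul_eq_C_mul]
  | add p q _ _ hp hq =>
    obtain ⟨P, hP⟩ := hp
    obtain ⟨Q, hQ⟩ := hq
    exact ⟨P + Q, fun n g => by
      rw [map_add, LinearMap.add_apply, hP, hQ, eval_add, add_mul, Finsupp.single_add]⟩
  | mul p q _ _ hp hq =>
    obtain ⟨P, hP⟩ := hp
    obtain ⟨Q, hQ⟩ := hq
    exact ⟨P * Q, fun n g => by rw [map_mul, Module.End.mul_apply, hQ, hP, eval_mul, mul_assoc]⟩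

lemma ghaRep_ghaX_mul_ghaH_mul_ghaY_single_succ (n : ℕ) :
    ghaRep f (ghaX f * ghaH f * ghaY f) (Finsupp.single (n + 1) 1)
      = Finsupp.single (n + 1) (sigmaIter f n * (sigmaIter f (n + 1) - X)) := by
  simp only [map_mul, ghaRep_ghaX, ghaRep_ghaY, ghaRep_ghaH, Module.End.mul_apply,
    opY_single_succ, opH_single, opX_single, mul_one]

lemma natDegree_sigmaIter_mul_sub_X (hf : 1 < f.natDegree) (n : ℕ) :
    (sigmaIter f n * (sigmaIter f (n + 1) - X)).natDegree
      = f.natDegree ^ n + f.natDegree ^ (n + 1) := by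
  have hX : (X : ℂ[X]).natDegree < (sigmaIter f (n + 1)).natDegree := by
    rw [natDegree_X, natDegree_sigmaIter]
    exact one_lt_pow₀ hf n.succ_ne_zero
  have hσ : sigmaIter f n ≠ 0 := by
    refine ne_zero_of_natDegree_gt (n := 0) ?_
    rw [natDegree_sigmaIter]
    exact pow_pos (by omega) n
  rw [natDegree_mul hσ (sub_ne_zero_of_ne fun h => hX.ne (by rw [h])),
    natDegree_sub_eq_left_of_natDegree_lt hX, natDegree_sigmaIter, natDegree_sigmaIter]

lemma not_exists_eval_sigmaIter_eq (hf : 1 < f.natDegree) :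
    ¬ ∃ Q : ℂ[X][X], ∀ n,
      Q.eval (sigmaIter f (n + 1)) = sigmaIter f n * (sigmaIter f (n + 1) - X) := by
  rintro ⟨Q, hQ⟩
  set d := f.natDegree
  set B := Q.support.sup fun i => (Q.coeff i).natDegree
  have hB : ∀ i, (Q.coeff i).natDegree ≤ B := fun i => by
    by_cases hi : i ∈ Q.support
    · exact Finset.le_sup (f := fun i => (Q.coeff i).natDegree) hi
    · simp [notMem_support_iff.mp hi]
  have hdeg : ∀ n, B < d ^ (n + 1) →
      Q.leadingCoeff.natDegree + Q.natDegree * d ^ (n + 1) = d ^ n + d ^ (n + 1) := by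
    intro n hn
    rw [← natDegree_sigmaIter_mul_sub_X f hf, ← hQ, natDegree_eval_of_natDegree_coeff_lt,
      natDegree_sigmaIter]
    exact fun i => (hB i).trans_lt (by rwa [natDegree_sigmaIter])
  have hBd : B < d ^ B := Nat.lt_pow_self hf
  have h₁ := hdeg B (hBd.trans (Nat.pow_lt_pow_right hf (by omega)))
  have h₂ := hdeg (B + 1) (hBd.trans (Nat.pow_lt_pow_right hf (by omega)))
  rw [pow_succ] at h₁
  rw [pow_succ, pow_succ] at h₂
  have hlt : d ^ B < d ^ B * d := lt_mul_right (pow_pos (by omega) B) hf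
  generalize Q.natDegree = m at h₁ h₂
  rcases m with _ | _ | m <;> nlinarith

end GeneralizedHeisenberg

open GeneralizedHeisenberg in
/-- For deg f > 1, the subalgebra ℂ[z,h] (z = xy - h central) is a proper
subalgebra of H(f)_0: it is contained in H(f)_0, but x h y ∈ H(f)_0 ∖ ℂ[z,h]. -/
theorem gha_czh_proper (f : ℂ[X]) (hf : 1 < f.natDegree) :
    (↑(Algebra.adjoin ℂ ({ghaX f * ghaY f - ghaH f, ghaH f} : Set (GHA f))) : Set (GHA f))
        ⊆ ↑(Submodule.span ℂ
            {a : GHA f | ∃ k m : ℕ, a = (ghaX f) ^ k * (ghaH f) ^ m * (ghaY f) ^ k}) ∧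
    ghaX f * ghaH f * ghaY f ∈ Submodule.span ℂ
        {a : GHA f | ∃ k m : ℕ, a = (ghaX f) ^ k * (ghaH f) ^ m * (ghaY f) ^ k} ∧
    ghaX f * ghaH f * ghaY f ∉
        Algebra.adjoin ℂ ({ghaX f * ghaY f - ghaH f, ghaH f} : Set (GHA f)) := by
  refine ⟨fun a ha => mem_degreeZeroPart_of_mem_adjoin f ha,
    Submodule.subset_span ⟨1, 1, by simp⟩, fun hmem => ?_⟩
  obtain ⟨Q, hQ⟩ := exists_ghaRep_single_of_mem_adjoin f hmem
  refine not_exists_eval_sigmaIter_eq f hf ⟨Q, fun n => ?_⟩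
  have h := (ghaRep_ghaX_mul_ghaH_mul_ghaY_single_succ f n).symm.trans (hQ (n + 1) 1)
  simpa using Finsupp.single_injective (n + 1) h.symm
end
end

section
/- Let f ∈ ℂ[h] with deg f = n > 1 and suppose a ∈ ℂ*, b ∈ ℂ satisfy f(ah + b) = a f(h) + b. Then a^{n−1} = 1 and b = (a − 1)·a_{n−1} / (n·a_n), where a_n, a_{n−1} are the coefficients of h^n and h^{n−1} in f. -/
/-!
Differentiating `f (a h + b) = a f(h) + b` exactly `n - 1` times kills the constant `b` and turns
`f` into the linear polynomial `n! aₙ h + (n-1)! aₙ₋₁`, so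
`a^(n-1) (n! aₙ (a h + b) + (n-1)! aₙ₋₁) = a (n! aₙ h + (n-1)! aₙ₋₁)`.
Comparing the coefficients of `h` gives `a^(n-1) = 1`, and then the constant terms give `b`.
-/

open Polynomial Nat

namespace Polynomial

theorem iterate_derivative_comp_C_mul_X_add_C {R : Type*} [CommSemiring R] (p : R[X]) (a b : R)
    (k : ℕ) :
    derivative^[k] (p.comp (C a * X + C b)) =
      C a ^ k * (derivative^[k] p).comp (C a * X + C b) := by
  induction k with
  | zero => simp
  | succ k ih =>
    rw [Function.iterate_succ_apply', ih, ← C_pow, derivative_C_mul, derivative_comp,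
      Function.iterate_succ_apply', derivative_add, derivative_C_mul_X, derivative_C, add_zero,
      C_pow, pow_succ, mul_assoc]

theorem iterate_derivative_eq_of_natDegree_le_succ {R : Type*} [Semiring R] {p : R[X]} {n : ℕ}
    (hp : p.natDegree ≤ n + 1) :
    derivative^[n] p = C (((n + 1)! : R) * p.coeff (n + 1)) * X + C ((n ! : R) * p.coeff n) := by
  have hlin : (derivative^[n] p).natDegree ≤ 1 :=
    (natDegree_iterate_derivative p n).trans (by omega)
  rw [eq_X_add_C_of_natDegree_le_one hlin, coeff_iterate_derivative, coeff_iterate_derivative,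
    zero_add, add_comm 1 n, descFactorial_self, nsmul_eq_mul, nsmul_eq_mul]
  congr
  simpa using factorial_mul_descFactorial (le_succ n)

end Polynomial

/-- If deg f = n > 1 and f(ah+b) = a f(h) + b with a ≠ 0, then a^(n-1) = 1 and
b = (a-1)·a_{n-1}/(n·a_n), where a_n, a_{n-1} are the top coefficients of f. -/
theorem affine_symmetry_constraints (f : ℂ[X]) (n : ℕ) (hn : 1 < n)
    (hdeg : f.natDegree = n) (a b : ℂ) (ha : a ≠ 0)
    (hab : f.comp (C a * X + C b) = C a * f + C b) :
    a ^ (n - 1) = 1 ∧ b = (a - 1) * f.coeff (n - 1) / (n * f.coeff n) := by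
  have hlead : f.coeff n ≠ 0 :=
    hdeg ▸ leadingCoeff_ne_zero.mpr (ne_zero_of_natDegree_gt (hdeg ▸ hn))
  obtain ⟨m, rfl⟩ : ∃ m, n = m + 1 := ⟨n - 1, by omega⟩
  rw [Nat.add_sub_cancel]
  have key := congrArg (derivative^[m]) hab
  rw [iterate_derivative_comp_C_mul_X_add_C, iterate_map_add, iterate_derivative_C_mul,
    iterate_derivative_C (by omega), add_zero,
    iterate_derivative_eq_of_natDegree_le_succ hdeg.le] at key
  set α := ((m + 1)! : ℂ) * f.coeff (m + 1)
  set β := (m ! : ℂ) * f.coeff m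
  simp only [add_comp, mul_comp, C_comp, X_comp, ← C_pow] at key
  have h1 := congrArg (coeff · 1) key
  have h0 := congrArg (coeff · 0) key
  simp only [coeff_C_mul, coeff_add, coeff_C, mul_add] at h1 h0
  norm_num at h1 h0
  have hα : α ≠ 0 := mul_ne_zero (cast_ne_zero.mpr (m + 1).factorial_ne_zero) hlead
  have ham : a ^ m = 1 := mul_right_cancel₀ (mul_ne_zero ha hα) (by linear_combination h1)
  refine ⟨ham, ?_⟩
  have hm : (m ! : ℂ) ≠ 0 := cast_ne_zero.mpr m.factorial_ne_zero
  rw [eq_div_iff (mul_ne_zero (cast_ne_zero.mpr (succ_ne_zero m)) hlead)]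
  refine mul_left_cancel₀ hm ?_
  simp only [α, β, ham, factorial_succ, cast_mul] at h0
  linear_combination h0
end

section
/- Let n ≥ 4 and 1 ≤ k < n − 1 with k dividing n − 1, and let f(h) = h^n + h^{k+1}. Then the set of pairs (a, b) ∈ ℂ* × ℂ with f(ah + b) = a f(h) + b is exactly {(a, 0) : a^k = 1}, a cyclic group of order k. -/
open Polynomial

/-! Comparing the coefficients of `h^(n-1)` in `f(ah+b) = a f(h) + b` gives `n a^(n-1) b = 0`,
because `h^(k+1)` cannot reach degree `n - 1`; hence `b = 0`. Then `f(ah) = a^n h^n + a^(k+1) h^(k+1)`,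
so the symmetries are the `a` with `a^n = a^(k+1) = a`, i.e. the `k`-th roots of unity when `k ∣ n - 1`. -/

theorem pow_succ_eq_self_iff {M : Type*} [MonoidWithZero M] [IsCancelMulZero M] {a : M} (ha : a ≠ 0) (k : ℕ) :
    a ^ (k + 1) = a ↔ a ^ k = 1 := by
  simp [pow_succ, mul_eq_right₀, ha]

namespace Polynomial

variable {R : Type*} {n m : ℕ} {a b : R}

section CommSemiring

variable [CommSemiring R]

def IsAffineSymmetry (f : R[X]) (a b : R) : Prop :=
  f.comp (C a * X + C b) = C a * f + C b

theorem coeff_C_mul_X_add_C_pow (a b : R) (m j : ℕ) :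
    ((C a * X + C b) ^ m).coeff j = a ^ j * b ^ (m - j) * m.choose j := by
  have hcomp : C a * X + C b = (X + C b).comp (C a * X) := by simp
  rw [hcomp, ← pow_comp, comp_C_mul_X_coeff, coeff_X_add_C_pow]
  ring

theorem X_pow_add_X_pow_comp_C_mul_X (a : R) (n m : ℕ) :
    (X ^ n + X ^ m : R[X]).comp (C a * X) = C (a ^ n) * X ^ n + C (a ^ m) * X ^ m := by
  simp only [add_comp, X_pow_comp, mul_pow, C_pow]

theorem isAffineSymmetry_X_pow_add_X_pow_zero_iff (hmn : m ≠ n) :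
    IsAffineSymmetry (X ^ n + X ^ m) a 0 ↔ a ^ n = a ∧ a ^ m = a := by
  rw [IsAffineSymmetry, C_0, add_zero, add_zero, X_pow_add_X_pow_comp_C_mul_X, mul_add]
  constructor
  · intro h
    constructor
    · simpa only [coeff_add, coeff_C_mul_X_pow, if_pos, if_neg hmn.symm, add_zero]
        using congrArg (coeff · n) h
    · simpa only [coeff_add, coeff_C_mul_X_pow, if_pos, if_neg hmn, zero_add]
        using congrArg (coeff · m) h
  · rintro ⟨hn, hm⟩
    rw [hn, hm]

end CommSemiring

variable [CommRing R] [IsDomain R]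

theorem IsAffineSymmetry.eq_zero_of_lt_sub_one [CharZero R] (hm : m < n - 1) (ha : a ≠ 0)
    (h : IsAffineSymmetry (X ^ n + X ^ m) a b) : b = 0 := by
  have hcoeff := congrArg (coeff · (n - 1)) h
  simp only [add_comp, X_pow_comp, coeff_add, coeff_C_mul_X_add_C_pow,
    coeff_C_mul, coeff_X_pow, coeff_C, Nat.choose_eq_zero_of_lt hm] at hcoeff
  rw [if_neg (by omega), if_neg (by omega), if_neg (by omega), Nat.sub_sub_self (by omega),
    Nat.choose_symm (by omega), Nat.choose_one_right] at hcoeff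
  simpa [ha, show n ≠ 0 by omega] using hcoeff

theorem ne_zero_and_isAffineSymmetry_iff [CharZero R] {k : ℕ} (hk : 1 ≤ k) (hkn : k + 1 < n - 1)
    (hdvd : k ∣ n - 1) :
    a ≠ 0 ∧ IsAffineSymmetry (X ^ n + X ^ (k + 1)) a b ↔ a ^ k = 1 ∧ b = 0 := by
  have hn : n = n - 1 + 1 := by omega
  constructor
  · rintro ⟨ha, h⟩
    obtain rfl := h.eq_zero_of_lt_sub_one hkn ha
    rw [isAffineSymmetry_X_pow_add_X_pow_zero_iff (by omega), pow_succ_eq_self_iff ha] at h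
    exact ⟨h.2, rfl⟩
  · rintro ⟨hak, rfl⟩
    have ha : a ≠ 0 := by
      rintro rfl
      simp [zero_pow (show k ≠ 0 by omega)] at hak
    refine ⟨ha, (isAffineSymmetry_X_pow_add_X_pow_zero_iff (by omega)).2 ?_⟩
    obtain ⟨j, hj⟩ := hdvd
    rw [hn, pow_succ_eq_self_iff ha, pow_succ_eq_self_iff ha, hj, pow_mul, hak, one_pow]
    exact ⟨rfl, rfl⟩

end Polynomial

theorem Complex.ncard_pow_eq_one {k : ℕ} (hk : k ≠ 0) : {a : ℂ | a ^ k = 1}.ncard = k := by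
  rw [← nthRootsFinset_toSet (Nat.pos_of_ne_zero hk), Set.ncard_coe_finset,
    (Complex.isPrimitiveRoot_exp k hk).card_nthRootsFinset]

/-- For f(h) = h^n + h^(k+1) with n ≥ 4, 1 ≤ k < n-1 and k ∣ n-1, the affine
symmetries f(ah+b) = a f(h) + b are exactly the pairs (a,0) with a^k = 1;
they form a cyclic group of order k. -/
theorem affine_symmetries_binomial (n k : ℕ) (hn : 4 ≤ n) (hk1 : 1 ≤ k)
    (hk2 : k < n - 1) (hdvd : k ∣ n - 1) :
    {p : ℂ × ℂ | p.1 ≠ 0 ∧ (X ^ n + X ^ (k + 1) : ℂ[X]).comp (C p.1 * X + C p.2)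
        = C p.1 * (X ^ n + X ^ (k + 1)) + C p.2}
      = {p : ℂ × ℂ | p.1 ^ k = 1 ∧ p.2 = 0} ∧
    (∀ p ∈ {p : ℂ × ℂ | p.1 ≠ 0 ∧ (X ^ n + X ^ (k + 1) : ℂ[X]).comp (C p.1 * X + C p.2)
        = C p.1 * (X ^ n + X ^ (k + 1)) + C p.2},
      ∀ q ∈ {p : ℂ × ℂ | p.1 ≠ 0 ∧ (X ^ n + X ^ (k + 1) : ℂ[X]).comp (C p.1 * X + C p.2)
        = C p.1 * (X ^ n + X ^ (k + 1)) + C p.2},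
      (p.1 * q.1, p.1 * q.2 + p.2) ∈ {p : ℂ × ℂ | p.1 ≠ 0 ∧
        (X ^ n + X ^ (k + 1) : ℂ[X]).comp (C p.1 * X + C p.2)
          = C p.1 * (X ^ n + X ^ (k + 1)) + C p.2}) ∧
    (∃ g ∈ {p : ℂ × ℂ | p.1 ≠ 0 ∧ (X ^ n + X ^ (k + 1) : ℂ[X]).comp (C p.1 * X + C p.2)
        = C p.1 * (X ^ n + X ^ (k + 1)) + C p.2},
      ∀ p ∈ {p : ℂ × ℂ | p.1 ≠ 0 ∧ (X ^ n + X ^ (k + 1) : ℂ[X]).comp (C p.1 * X + C p.2)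
        = C p.1 * (X ^ n + X ^ (k + 1)) + C p.2}, ∃ j : ℕ, p = (g.1 ^ j, 0)) ∧
    {p : ℂ × ℂ | p.1 ≠ 0 ∧ (X ^ n + X ^ (k + 1) : ℂ[X]).comp (C p.1 * X + C p.2)
        = C p.1 * (X ^ n + X ^ (k + 1)) + C p.2}.ncard = k := by
  have hkn : k + 1 < n - 1 := by
    have := Nat.le_of_dvd (by omega) (Nat.dvd_sub hdvd (dvd_refl k))
    omega
  have hsymm : {p : ℂ × ℂ | p.1 ≠ 0 ∧ (X ^ n + X ^ (k + 1) : ℂ[X]).comp (C p.1 * X + C p.2)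
      = C p.1 * (X ^ n + X ^ (k + 1)) + C p.2} = {a : ℂ | a ^ k = 1} ×ˢ {0} :=
    Set.ext fun p ↦ ne_zero_and_isAffineSymmetry_iff hk1 hkn hdvd
  have hk : k ≠ 0 := by omega
  have hζ := Complex.isPrimitiveRoot_exp k hk
  have : NeZero k := ⟨hk⟩
  rw [hsymm]
  refine ⟨rfl, ?_, ⟨(_, 0), ⟨hζ.pow_eq_one, rfl⟩, ?_⟩, ?_⟩
  · rintro ⟨a, _⟩ ⟨ha, rfl⟩ ⟨c, _⟩ ⟨hc, rfl⟩
    exact ⟨by simp_all [mul_pow], by simp⟩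
  · rintro ⟨a, b⟩ ⟨ha, rfl⟩
    obtain ⟨j, -, rfl⟩ := hζ.eq_pow_of_pow_eq_one ha
    exact ⟨j, rfl⟩
  · rw [Set.ncard_prod, Complex.ncard_pow_eq_one hk, Set.ncard_singleton, mul_one]
end

section
/- Let f ∈ ℂ[h] with deg f > 1 and suppose φ is an affine map φ(h) = ah + b (a ∈ ℂ*) such that f(ah + b) = a f(h) + b. Then the assignment x ↦ x, y ↦ a y, h ↦ ah + b extends to an algebra automorphism of H(f). -/
open Polynomial MulOpposite

noncomputable section

namespace GHAAux

variable (f : ℂ[X])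

lemma relHX : ghaH f * ghaX f = ghaX f * aeval (ghaH f) f := by
  have := RingQuot.mkAlgHom_rel ℂ (HeisRel.hx (f := f))
  simpa [ghaX, ghaY, ghaH, map_mul, ← Polynomial.aeval_algHom_apply] using this

lemma relYH : ghaY f * ghaH f = aeval (ghaH f) f * ghaY f := by
  have := RingQuot.mkAlgHom_rel ℂ (HeisRel.yh (f := f))
  simpa [ghaX, ghaY, ghaH, map_mul, ← Polynomial.aeval_algHom_apply] using this

lemma relYX : ghaY f * ghaX f = ghaX f * ghaY f + (aeval (ghaH f) f - ghaH f) := by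
  have := RingQuot.mkAlgHom_rel ℂ (HeisRel.yx (f := f))
  simpa [ghaX, ghaY, ghaH, map_mul, map_add, map_sub,
    ← Polynomial.aeval_algHom_apply] using this

/-- The target of the generators under the endomorphism with parameters c, d. -/
def gmap (c d : ℂ) : Fin 3 → GHA f :=
  ![ghaX f, c • ghaY f, c • ghaH f + algebraMap ℂ (GHA f) d]

lemma aeval_affine {A : Type*} [Ring A] [Algebra ℂ A] (t : A) (c d : ℂ)
    (hcd : f.comp (C c * X + C d) = C c * f + C d) :
    aeval (c • t + algebraMap ℂ A d) f = c • aeval t f + algebraMap ℂ A d := by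
  have h1 : aeval t (C c * X + C d) = c • t + algebraMap ℂ A d := by
    simp [Algebra.smul_def]
  have h2 := Polynomial.aeval_comp (R := ℂ) (A := A) t (p := f) (q := C c * X + C d)
  rw [h1] at h2
  rw [← h2, hcd]
  simp [Algebra.smul_def]

lemma rel_preserved (c d : ℂ) (hcd : f.comp (C c * X + C d) = C c * f + C d)
    {u v : FreeAlgebra ℂ (Fin 3)} (h : HeisRel f u v) :
    FreeAlgebra.lift ℂ (gmap f c d) u = FreeAlgebra.lift ℂ (gmap f c d) v := by
  have key : aeval (c • ghaH f + algebraMap ℂ (GHA f) d) f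
      = c • aeval (ghaH f) f + algebraMap ℂ (GHA f) d := aeval_affine f _ c d hcd
  induction h with
  | hx =>
    simp only [map_mul, ← Polynomial.aeval_algHom_apply, FreeAlgebra.lift_ι_apply]
    show (c • ghaH f + algebraMap ℂ (GHA f) d) * ghaX f
        = ghaX f * aeval (gmap f c d 2) f
    have : gmap f c d 2 = c • ghaH f + algebraMap ℂ (GHA f) d := rfl
    rw [this, key, add_mul, mul_add, smul_mul_assoc, mul_smul_comm, relHX,
      Algebra.commutes]
  | yh =>
    simp only [map_mul, ← Polynomial.aeval_algHom_apply, FreeAlgebra.lift_ι_apply]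
    show gmap f c d 1 * gmap f c d 2 = aeval (gmap f c d 2) f * gmap f c d 1
    have h1 : gmap f c d 1 = c • ghaY f := rfl
    have h2 : gmap f c d 2 = c • ghaH f + algebraMap ℂ (GHA f) d := rfl
    rw [h1, h2, key, add_mul, mul_add, smul_mul_assoc, mul_smul_comm,
      smul_mul_assoc, mul_smul_comm, relYH, Algebra.commutes]
    simp [smul_mul_assoc, mul_smul_comm]
  | yx =>
    simp only [map_mul, map_add, map_sub, ← Polynomial.aeval_algHom_apply,
      FreeAlgebra.lift_ι_apply]
    show gmap f c d 1 * gmap f c d 0 = gmap f c d 0 * gmap f c d 1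
        + (aeval (gmap f c d 2) f - gmap f c d 2)
    have h0 : gmap f c d 0 = ghaX f := rfl
    have h1 : gmap f c d 1 = c • ghaY f := rfl
    have h2 : gmap f c d 2 = c • ghaH f + algebraMap ℂ (GHA f) d := rfl
    rw [h0, h1, h2, key, smul_mul_assoc, mul_smul_comm, relYX]
    rw [smul_add, smul_sub]
    abel

/-- The algebra endomorphism of GHA f given by x ↦ x, y ↦ c y, h ↦ c h + d. -/
def Phi (c d : ℂ) (hcd : f.comp (C c * X + C d) = C c * f + C d) :
    GHA f →ₐ[ℂ] GHA f :=
  RingQuot.liftAlgHom ℂ ⟨FreeAlgebra.lift ℂ (gmap f c d),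
    @fun u v h => rel_preserved f c d hcd h⟩

lemma Phi_gen (c d : ℂ) (hcd : f.comp (C c * X + C d) = C c * f + C d) (i : Fin 3) :
    Phi f c d hcd (RingQuot.mkAlgHom ℂ (HeisRel f) (FreeAlgebra.ι ℂ i))
      = gmap f c d i := by
  simp [Phi, RingQuot.liftAlgHom_mkAlgHom_apply]

lemma Phi_X (c d : ℂ) (hcd : f.comp (C c * X + C d) = C c * f + C d) :
    Phi f c d hcd (ghaX f) = ghaX f := Phi_gen f c d hcd 0

lemma Phi_Y (c d : ℂ) (hcd : f.comp (C c * X + C d) = C c * f + C d) :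
    Phi f c d hcd (ghaY f) = c • ghaY f := Phi_gen f c d hcd 1

lemma Phi_H (c d : ℂ) (hcd : f.comp (C c * X + C d) = C c * f + C d) :
    Phi f c d hcd (ghaH f) = c • ghaH f + algebraMap ℂ (GHA f) d :=
  Phi_gen f c d hcd 2

lemma hom_ext {F G : GHA f →ₐ[ℂ] GHA f}
    (h : ∀ i : Fin 3, F (RingQuot.mkAlgHom ℂ (HeisRel f) (FreeAlgebra.ι ℂ i))
      = G (RingQuot.mkAlgHom ℂ (HeisRel f) (FreeAlgebra.ι ℂ i))) : F = G := by
  have hcomp : F.comp (RingQuot.mkAlgHom ℂ (HeisRel f))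
      = G.comp (RingQuot.mkAlgHom ℂ (HeisRel f)) := by
    apply FreeAlgebra.hom_ext
    funext i
    simpa using h i
  apply AlgHom.ext
  intro z
  obtain ⟨w, rfl⟩ := RingQuot.mkAlgHom_surjective ℂ (HeisRel f) z
  exact congrArg (fun (F : FreeAlgebra ℂ (Fin 3) →ₐ[ℂ] GHA f) => F w) hcomp

end GHAAux

/-- If deg f > 1, a ≠ 0 and f(ah+b) = a f(h) + b, then x ↦ x, y ↦ a y, h ↦ ah + b
extends to an algebra automorphism of H(f). -/
theorem gha_aut_fixing_x (f : ℂ[X]) (hf : 1 < f.natDegree) (a b : ℂ) (ha : a ≠ 0)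
    (hab : f.comp (C a * X + C b) = C a * f + C b) :
    ∃ φ : GHA f ≃ₐ[ℂ] GHA f,
      φ (ghaX f) = ghaX f ∧ φ (ghaY f) = a • ghaY f ∧
      φ (ghaH f) = a • ghaH f + algebraMap ℂ (GHA f) b := by
  classical
  open GHAAux in
  -- inverse affine parameters
  have hab' : f.comp (C a⁻¹ * X + C (-(a⁻¹ * b))) = C a⁻¹ * f + C (-(a⁻¹ * b)) := by
    have hcomp : (C a * X + C b).comp (C a⁻¹ * X + C (-(a⁻¹ * b))) = X := by
      rw [add_comp, mul_comp, C_comp, X_comp, C_comp, mul_add, ← mul_assoc,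
        ← C_mul, mul_inv_cancel₀ ha, C_1, one_mul, ← C_mul, add_assoc, ← C_add]
      have : a * -(a⁻¹ * b) + b = 0 := by field_simp; ring
      rw [this, C_0, add_zero]
    have h1 : f.comp ((C a * X + C b).comp (C a⁻¹ * X + C (-(a⁻¹ * b)))) = f := by
      rw [hcomp, comp_X]
    rw [← Polynomial.comp_assoc, hab] at h1
    have h2 : C a * f.comp (C a⁻¹ * X + C (-(a⁻¹ * b))) + C b = f := by
      simpa [add_comp, mul_comp, C_comp] using h1
    have h3 : f.comp (C a⁻¹ * X + C (-(a⁻¹ * b))) = C a⁻¹ * (f - C b) := by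
      have := congrArg (fun p => C a⁻¹ * (p - C b)) h2
      rw [← this]
      rw [add_sub_cancel_right, ← mul_assoc, ← C_mul, inv_mul_cancel₀ ha]
      simp
    rw [h3, mul_sub, ← C_mul, map_neg, C_mul]
    ring
  have hFG : (Phi f a b hab).comp (Phi f a⁻¹ (-(a⁻¹ * b)) hab')
      = AlgHom.id ℂ (GHA f) := by
    apply hom_ext f
    intro i
    fin_cases i
    · show (Phi f a b hab) ((Phi f a⁻¹ (-(a⁻¹ * b)) hab') (ghaX f)) = ghaX f
      rw [Phi_X, Phi_X]
    · show (Phi f a b hab) ((Phi f a⁻¹ (-(a⁻¹ * b)) hab') (ghaY f)) = ghaY f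
      rw [Phi_Y, map_smul, Phi_Y, smul_smul, inv_mul_cancel₀ ha, one_smul]
    · show (Phi f a b hab) ((Phi f a⁻¹ (-(a⁻¹ * b)) hab') (ghaH f)) = ghaH f
      rw [Phi_H, map_add, map_smul, Phi_H, AlgHom.commutes]
      simp only [Algebra.algebraMap_eq_smul_one, smul_add, smul_smul]
      match_scalars <;> (field_simp; try ring)
  have hGF : (Phi f a⁻¹ (-(a⁻¹ * b)) hab').comp (Phi f a b hab)
      = AlgHom.id ℂ (GHA f) := by
    apply hom_ext f
    intro i
    fin_cases i
    · show (Phi f a⁻¹ (-(a⁻¹ * b)) hab') ((Phi f a b hab) (ghaX f)) = ghaX f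
      rw [Phi_X, Phi_X]
    · show (Phi f a⁻¹ (-(a⁻¹ * b)) hab') ((Phi f a b hab) (ghaY f)) = ghaY f
      rw [Phi_Y, map_smul, Phi_Y, smul_smul, mul_inv_cancel₀ ha, one_smul]
    · show (Phi f a⁻¹ (-(a⁻¹ * b)) hab') ((Phi f a b hab) (ghaH f)) = ghaH f
      rw [Phi_H, map_add, map_smul, Phi_H, AlgHom.commutes]
      simp only [Algebra.algebraMap_eq_smul_one, smul_add, smul_smul]
      match_scalars <;> (field_simp; try ring)
  refine ⟨AlgEquiv.ofAlgHom (Phi f a b hab) (Phi f a⁻¹ (-(a⁻¹ * b)) hab') hFG hGF,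
    Phi_X f a b hab, Phi_Y f a b hab, Phi_H f a b hab⟩
end
end
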